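/- arXiv:cs/0201008 — 2 statements merged into one kernel-verified Lean document; each statement's English description precedes it below -/
import Mathlib

section
/- Automaton-to-grammar direction: for any finite string tree automaton with pure states A = (Σ, Q, Q_f, q₀, Δ) there exists a regular string tree grammar G = (Σ, N, S, R) generating L(A); concretely, one may take N = (Q ∖ Σ) ∪ {S} with S fresh, for each nᵢ ∈ N ∖ {S} a regular expression eᵢ over Q equivalent to the finite string automaton (Q, Q ∖ Σ, {nᵢ}, q₀, Δ), a regular expression e_S equivalent to (Q, Q ∖ Σ, Q_f, q₀, Δ), and R = ⋃ᵢ {nᵢ → ⟨eᵢ⟩} ∪ {S → ⟨e_S⟩}; then L(G) = L(A). -/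
/-!  Common definitions: string trees over an alphabet (following
N. Schmidt, A. Patel, "Using Tree Automata and Regular Expressions to
Manipulate Hierarchically Structured Data").

Symbols: an ambient type `U` of "plain" symbols, extended with the two
angle brackets and the slash. -/

inductive TSym (U : Type) : Type where
  | op : TSym U          -- ⟨
  | cl : TSym U          -- ⟩
  | slash : TSym U       -- /
  | ltr : U → TSym U     -- a plain symbol

namespace StringTree

variable {U V : Type}

/-- The letters of an alphabet `S ⊆ U`, viewed as (non-bracket) symbols. -/
def ltrs (S : Set U) : Set (TSym U) := {x | ∃ a ∈ S, x = TSym.ltr a}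

/-- String trees over a set `S` of allowed non-bracket symbols:
`⟨⟩ ∈ T`, `⟨a⟩ ∈ T` for `a ∈ S`, closed under concatenation
`⟨x⟩·⟨y⟩ = ⟨xy⟩` and encapsulation `t ↦ ⟨t⟩`. -/
inductive IsTree (S : Set (TSym U)) : List (TSym U) → Prop where
  | nil : IsTree S [TSym.op, TSym.cl]
  | single {x : TSym U} : x ∈ S → IsTree S [TSym.op, x, TSym.cl]
  | concat {x y : List (TSym U)} :
      IsTree S (TSym.op :: (x ++ [TSym.cl])) → IsTree S (TSym.op :: (y ++ [TSym.cl])) →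
      IsTree S (TSym.op :: ((x ++ y) ++ [TSym.cl]))
  | encap {t : List (TSym U)} : IsTree S t → IsTree S (TSym.op :: (t ++ [TSym.cl]))

/-- `T(Σ)`, the set of string trees over the alphabet `Σ ⊆ U`. -/
def TreeSet (S : Set U) : Set (List (TSym U)) := {t | IsTree (ltrs S) t}

/-- A plain string, viewed as a string of symbols. -/
def strOf (s : List U) : List (TSym U) := s.map TSym.ltr

/-- Move relation of a generalised non-deterministic finite string tree
automaton with initial states `Q0`, horizontal rules `Δ` and vertical
rules `γ`:
(a) `l⟨s⟩r ⇒ l⟨a/s⟩r` if `a ∈ Q0` (initial state assignment);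
(b) `l⟨a/bs⟩r ⇒ l⟨c/s⟩r` if `(a,b) → c ∈ Δ` (horizontal move);
(c) `l⟨a/⟩r ⇒ lbr` if `b ∈ γ a` (vertical move). -/
inductive GMove (Q0 : Set U) (Δ : Set (U × U × U)) (γ : U → Set U) :
    List (TSym U) → List (TSym U) → Prop where
  | init {l r : List (TSym U)} {s : List U} {a : U} :
      a ∈ Q0 →
      GMove Q0 Δ γ (l ++ [TSym.op] ++ strOf s ++ [TSym.cl] ++ r)
        (l ++ [TSym.op, TSym.ltr a, TSym.slash] ++ strOf s ++ [TSym.cl] ++ r)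
  | horiz {l r : List (TSym U)} {s : List U} {a b c : U} :
      (a, b, c) ∈ Δ →
      GMove Q0 Δ γ (l ++ [TSym.op, TSym.ltr a, TSym.slash, TSym.ltr b] ++ strOf s ++ [TSym.cl] ++ r)
        (l ++ [TSym.op, TSym.ltr c, TSym.slash] ++ strOf s ++ [TSym.cl] ++ r)
  | vert {l r : List (TSym U)} {a b : U} :
      b ∈ γ a →
      GMove Q0 Δ γ (l ++ [TSym.op, TSym.ltr a, TSym.slash, TSym.cl] ++ r)
        (l ++ [TSym.ltr b] ++ r)

/-- Move relation of an NFSTA: the GNFSTA moves with the single initial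
state `q0` and with the vertical move `l⟨a/⟩r ⇒ lar`. -/
def NMove (q0 : U) (Δ : Set (U × U × U)) : List (TSym U) → List (TSym U) → Prop :=
  GMove {q0} Δ (fun a => {a})

/-- The final tree `⟨q/⟩`. -/
def finalTree (q : U) : List (TSym U) := [TSym.op, TSym.ltr q, TSym.slash, TSym.cl]

/-- Acceptance by a GNFSTA: `t ⇒* ⟨q_f/⟩` for some `q_f ∈ Q_f`. -/
def GAccepts (Q0 : Set U) (Δ : Set (U × U × U)) (γ : U → Set U) (Qf : Set U)
    (t : List (TSym U)) : Prop :=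
  ∃ qf ∈ Qf, Relation.ReflTransGen (GMove Q0 Δ γ) t (finalTree qf)

/-- The language of a GNFSTA: the set of trees of `T(Σ)` it accepts. -/
def GLang (Sa Q0 : Set U) (Δ : Set (U × U × U)) (γ : U → Set U) (Qf : Set U) :
    Set (List (TSym U)) :=
  {t | t ∈ TreeSet Sa ∧ GAccepts Q0 Δ γ Qf t}

/-- Acceptance by an NFSTA. -/
def NAccepts (q0 : U) (Δ : Set (U × U × U)) (Qf : Set U) (t : List (TSym U)) : Prop :=
  GAccepts {q0} Δ (fun a => {a}) Qf t

/-- The language of an NFSTA. -/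
def NLang (Sa : Set U) (q0 : U) (Δ : Set (U × U × U)) (Qf : Set U) : Set (List (TSym U)) :=
  GLang Sa {q0} Δ (fun a => {a}) Qf

/-- Well-formedness of a GNFSTA `(Σ, Q, Q_f, Q₀, Δ, γ)`:
`Q` is finite, `Σ ⊆ Q`, `Q_f ⊆ Q`, `Q₀ ⊆ Q`, the rules of `Δ` are over `Q`,
and `γ` maps states of `Q` to sets of states of `Q`. -/
def GWF (Sa Q Qf Q0 : Set U) (Δ : Set (U × U × U)) (γ : U → Set U) : Prop :=
  Q.Finite ∧ Sa ⊆ Q ∧ Qf ⊆ Q ∧ Q0 ⊆ Q ∧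
    (∀ p ∈ Δ, p.1 ∈ Q ∧ p.2.1 ∈ Q ∧ p.2.2 ∈ Q) ∧ (∀ q ∈ Q, γ q ⊆ Q)

/-- Well-formedness of an NFSTA `(Σ, Q, Q_f, q₀, Δ)`. -/
def NWF (Sa Q Qf : Set U) (q0 : U) (Δ : Set (U × U × U)) : Prop :=
  Q.Finite ∧ Sa ⊆ Q ∧ Qf ⊆ Q ∧ q0 ∈ Q ∧ ∀ p ∈ Δ, p.1 ∈ Q ∧ p.2.1 ∈ Q ∧ p.2.2 ∈ Q

/-- A GNFSTA has pure states: no horizontal or vertical rule produces a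
symbol of `Σ`, no horizontal rule has its state (first) component in `Σ`,
`γ(a) = ∅` for `a ∈ Σ`, and `Q₀ ∪ Q_f ⊆ Q ∖ Σ`. -/
def PureG (Sa Q Qf Q0 : Set U) (Δ : Set (U × U × U)) (γ : U → Set U) : Prop :=
  (∀ p ∈ Δ, p.1 ∉ Sa ∧ p.2.2 ∉ Sa) ∧ (∀ a ∈ Sa, γ a = ∅) ∧
    (∀ q : U, ∀ p ∈ γ q, p ∉ Sa) ∧ Q0 ⊆ Q \ Sa ∧ Qf ⊆ Q \ Sa

/-- An NFSTA has pure states. -/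
def PureN (Sa Q Qf : Set U) (q0 : U) (Δ : Set (U × U × U)) : Prop :=
  (∀ p ∈ Δ, p.1 ∉ Sa ∧ p.2.2 ∉ Sa) ∧ q0 ∈ Q \ Sa ∧ Qf ⊆ Q \ Sa


/-! Additional notions. -/

/-- `⟨s₀ t₁ s₁ ⋯ tₙ sₙ⟩`: the string tree assembled from a head string `s₀`
and a list of pairs `(tᵢ, sᵢ)` of a subtree and a following string. -/
def flatRep (s0 : List U) (rest : List (List (TSym U) × List U)) : List (TSym U) :=
  TSym.op :: (strOf s0 ++ (rest.map (fun p => p.1 ++ strOf p.2)).flatten ++ [TSym.cl])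

/-- The inner string of a tree `⟨x⟩`, i.e. `x`. -/
def innerStr (t : List (TSym U)) : List (TSym U) := (t.drop 1).dropLast

/-- Tree concatenation `⟨x⟩·⟨y⟩ = ⟨xy⟩`. -/
def tconc (u v : List (TSym U)) : List (TSym U) :=
  TSym.op :: ((innerStr u ++ innerStr v) ++ [TSym.cl])

/-- The null tree `⟨⟩`. -/
def nilTree : List (TSym U) := [TSym.op, TSym.cl]

/-- `w` is a string over `Q ∪ {/}`. -/
def OverQSlash (Q : Set U) (w : List (TSym U)) : Prop :=
  ∀ x ∈ w, x = TSym.slash ∨ ∃ q ∈ Q, x = TSym.ltr q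

/-- Renaming of symbols along a map of plain symbols. -/
def symRel (f : U → V) : TSym U → TSym V
  | TSym.op => TSym.op
  | TSym.cl => TSym.cl
  | TSym.slash => TSym.slash
  | TSym.ltr a => TSym.ltr (f a)

/-- Renaming of the symbols of a tree along a map of plain symbols. -/
def treeRel (f : U → V) (t : List (TSym U)) : List (TSym V) := t.map (symRel f)

/-- The injective renaming `a ↦ {a}`. -/
def sing : U → Set U := fun a => {a}

/-- The vertical-rule function `γ` of a pure-state GNFSTA, extended by
`γ(a) = {a}` for `a ∈ Σ` and to sets by unions: `γ(b') = ⋃_{b ∈ b'} γ(b)`. -/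
def gammaExt (Sa : Set U) (γ : U → Set U) (b' : Set U) : Set U :=
  {c | ∃ b ∈ b', c ∈ γ b ∨ (c = b ∧ b ∈ Sa)}

/-- The transition function of the subset construction:
`Δ'(a', b') = {c | (a,b) → c ∈ Δ, a ∈ a', b ∈ γ(b')}`. -/
def subsetDelta (Sa : Set U) (γ : U → Set U) (Δ : Set (U × U × U)) (a' b' : Set U) : Set U :=
  {c | ∃ a ∈ a', ∃ b ∈ gammaExt Sa γ b', (a, b, c) ∈ Δ}

/-- The rule set of the subset-construction DFSTA, defined on pairs of
subsets of `Q`. -/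
def subsetRules (Sa : Set U) (γ : U → Set U) (Δ : Set (U × U × U)) (Q : Set U) :
    Set (Set U × Set U × Set U) :=
  {x | x.1 ⊆ Q ∧ x.2.1 ⊆ Q ∧ x.2.2 = subsetDelta Sa γ Δ x.1 x.2.1}

/-- A rule set is deterministic: at most one rule per left-hand side. -/
def Deterministic {α : Type} (Δ : Set (α × α × α)) : Prop :=
  ∀ a b c₁ c₂, (a, b, c₁) ∈ Δ → (a, b, c₂) ∈ Δ → c₁ = c₂

/-- `L` is recognised by some GNFSTA over the alphabet `Sa`. -/
def RecogG (Sa : Set U) (L : Set (List (TSym U))) : Prop :=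
  ∃ Q Qf Q0 Δ γ, GWF Sa Q Qf Q0 Δ γ ∧ GLang Sa Q0 Δ γ Qf = L

/-- `L` is recognised by some NFSTA over the alphabet `Sa`. -/
def RecogN (Sa : Set U) (L : Set (List (TSym U))) : Prop :=
  ∃ Q Qf q0 Δ, NWF Sa Q Qf q0 Δ ∧ NLang Sa q0 Δ Qf = L

/-- `L` is recognised, after the injective alphabet renaming `a ↦ {a}`,
by some deterministic FSTA. -/
def RecogD (Sa : Set U) (L : Set (List (TSym U))) : Prop :=
  ∃ (Q' Qf' : Set (Set U)) (q0' : Set U) (Δ' : Set (Set U × Set U × Set U)),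
    NWF (sing '' Sa) Q' Qf' q0' Δ' ∧ Deterministic Δ' ∧
    NLang (sing '' Sa) q0' Δ' Qf' = treeRel sing '' L

/-- Runs of a classical finite (string) automaton with transition map `δ`. -/
inductive FASteps (δ : U → U → Set U) : U → List U → U → Prop where
  | nil (q : U) : FASteps δ q [] q
  | cons {q a p s q'} : p ∈ δ q a → FASteps δ p s q' → FASteps δ q (a :: s) q'

/-- The language of a classical finite automaton `(Sa, Q, Q_f, q₀, δ)`. -/
def FALang (Sa : Set U) (δ : U → U → Set U) (q0 : U) (Qf : Set U) : Set (List U) :=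
  {s | (∀ a ∈ s, a ∈ Sa) ∧ ∃ qf ∈ Qf, FASteps δ q0 s qf}

/-- `n`-fold composition of a relation: `relPow r n a b` iff `a ⇒ⁿ b`. -/
def relPow {α : Type} (r : α → α → Prop) : ℕ → α → α → Prop
  | 0, a, b => a = b
  | n + 1, a, c => ∃ b, r a b ∧ relPow r n b c


/-! Ranked terms and classical tree automata. -/

/-- Unranked terms (rose trees) over a symbol type `F`. -/
inductive PreTerm (F : Type) : Type where
  | node : F → List (PreTerm F) → PreTerm F

/-- A term is well-ranked w.r.t. an arity function. -/
inductive WellRanked {F : Type} (ar : F → ℕ) : PreTerm F → Prop where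
  | node {f : F} {ts : List (PreTerm F)} : ts.length = ar f →
      (∀ t ∈ ts, WellRanked ar t) → WellRanked ar (PreTerm.node f ts)

/-- The term-to-string-tree map `τ`:
`τ(f(t₁,…,t_p)) = ⟨f τ(t₁) ⋯ τ(t_p)⟩` (and `τ(a) = ⟨a⟩` for constants). -/
def tau {F : Type} : PreTerm F → List (TSym F)
  | PreTerm.node f ts =>
      TSym.op :: TSym.ltr f :: ((ts.attach.map (fun x => tau x.1)).flatten ++ [TSym.cl])
  decreasing_by
    simp only [PreTerm.node.sizeOf_spec]
    have h := List.sizeOf_lt_of_mem x.2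
    omega

/-- A term over the ranked alphabet given by symbols `Sa` and arities `ar`. -/
inductive GoodTerm (Sa : Set U) (ar : U → ℕ) : PreTerm U → Prop where
  | node {f : U} {ts : List (PreTerm U)} : f ∈ Sa → ts.length = ar f →
      (∀ t ∈ ts, GoodTerm Sa ar t) → GoodTerm Sa ar (PreTerm.node f ts)

/-- Bottom-up runs of a classical tree automaton with rules
`f(q₁,…,qₙ) → q`: `CRun Δh t q` means the run assigns state `q` to `t`. -/
inductive CRun (Δh : Set (U × List U × U)) : PreTerm U → U → Prop where
  | node {f : U} {ts : List (PreTerm U)} {qs : List U} {q : U} :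
      (f, qs, q) ∈ Δh → qs.length = ts.length →
      (∀ p ∈ ts.zip qs, CRun Δh p.1 p.2) →
      CRun Δh (PreTerm.node f ts) q

/-- The term language of a classical tree automaton. -/
def TermLang (Sa : Set U) (ar : U → ℕ) (Δh : Set (U × List U × U)) (Qhf : Set U) :
    Set (PreTerm U) :=
  {t | GoodTerm Sa ar t ∧ ∃ q ∈ Qhf, CRun Δh t q}

/-! Vertical tree representation of strings. -/

def omegaRev : List U → List (TSym U)
  | [] => [TSym.op, TSym.cl]
  | a :: s => TSym.op :: (omegaRev s ++ [TSym.ltr a, TSym.cl])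

/-- The vertical tree representation `ω(a₁⋯aₙ) = ⟨⟨⋯⟨⟩a₁⟩a₂⟩⋯aₙ⟩`,
defined by `ω(ε) = ⟨⟩` and `ω(sa) = ⟨ω(s)⟩·⟨a⟩`. -/
def omega (s : List U) : List (TSym U) := omegaRev s.reverse

/-! Regular string tree grammars. -/

/-- A regular expression is over the symbol set `S`. -/
def REOver (S : Set U) : RegularExpression U → Prop
  | RegularExpression.zero => True
  | RegularExpression.epsilon => True
  | RegularExpression.char a => a ∈ S
  | RegularExpression.plus e₁ e₂ => REOver S e₁ ∧ REOver S e₂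
  | RegularExpression.comp e₁ e₂ => REOver S e₁ ∧ REOver S e₂
  | RegularExpression.star e => REOver S e

/-- One derivation step of a regular string tree grammar with rule set `R`:
`lXr →_G l⟨x⟩r` whenever `X → ⟨e⟩ ∈ R` and `x ∈ ⟦e⟧`. -/
def GDeriv (R : Set (U × RegularExpression U)) (u v : List (TSym U)) : Prop :=
  ∃ (l r : List (TSym U)) (X : U) (e : RegularExpression U) (x : List U),
    (X, e) ∈ R ∧ x ∈ e.matches' ∧
    u = l ++ [TSym.ltr X] ++ r ∧ v = l ++ (TSym.op :: (strOf x ++ [TSym.cl])) ++ r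

/-- The language generated by a regular string tree grammar with axiom `S`:
all trees of `T(Σ)` derivable from `S`. -/
def GramLang (Sa : Set U) (S : U) (R : Set (U × RegularExpression U)) :
    Set (List (TSym U)) :=
  {t | t ∈ TreeSet Sa ∧ Relation.ReflTransGen (GDeriv R) [TSym.ltr S] t}

/-- Well-formedness of a regular string tree grammar `(Σ, N, S, R)`. -/
def GramWF (Sa N : Set U) (S : U) (R : Set (U × RegularExpression U)) : Prop :=
  N.Finite ∧ Disjoint N Sa ∧ S ∈ N ∧ ∀ p ∈ R, p.1 ∈ N ∧ REOver (Sa ∪ N) p.2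

/-! The map `Γ` and the instance relation `⊴` of the subset-construction
equivalence proof. -/

/-- `Γ` applies (the extension of) `γ` to every set-symbol that is not
immediately followed by a slash:
`Γ(ε)=ε`, `Γ(⟨s)=⟨Γ(s)`, `Γ(⟩s)=⟩Γ(s)`, `Γ(a/s)=a/Γ(s)`, `Γ(as)=γ(a)Γ(s)`. -/
def GammaMap (g : Set U → Set U) : List (TSym (Set U)) → List (TSym (Set U))
  | [] => []
  | TSym.op :: s => TSym.op :: GammaMap g s
  | TSym.cl :: s => TSym.cl :: GammaMap g s
  | TSym.slash :: s => TSym.slash :: GammaMap g s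
  | TSym.ltr a :: TSym.slash :: s => TSym.ltr a :: TSym.slash :: GammaMap g s
  | TSym.ltr a :: s => TSym.ltr (g a) :: GammaMap g s

/-- Symbol-wise instance relation: brackets and slashes match, and a plain
symbol is an element of the corresponding set-symbol. -/
inductive SymInst : TSym U → TSym (Set U) → Prop where
  | op : SymInst TSym.op TSym.op
  | cl : SymInst TSym.cl TSym.cl
  | slash : SymInst TSym.slash TSym.slash
  | ltr {a : U} {A : Set U} : a ∈ A → SymInst (TSym.ltr a) (TSym.ltr A)

/-- `v ⊴ v'`: `v` is an instance of `v'`. -/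
def Inst (v : List (TSym U)) (v' : List (TSym (Set U))) : Prop :=
  List.Forall₂ SymInst v v'

end StringTree

namespace StringTree

/-- The transition map of the finite string automaton determined by the
rule set `Δ` of an FSTA: `δ(q, a) = {p | (q, a) → p ∈ Δ}`. -/
def faDelta {U : Type} (Δ : Set (U × U × U)) : U → U → Set U :=
  fun q a => {p | (q, a, p) ∈ Δ}

section Aux

variable {U : Type}

open TSym

/-- Parse predicate: `w` is a configuration string that evaluates to the
letter string `s`. -/
inductive Pre (Q : Set U) (Δ : Set (U × U × U)) (q0 : U) :
    List (TSym U) → List U → Prop where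
  | nil : Pre Q Δ q0 [] []
  | ltr {b w s} : b ∈ Q → Pre Q Δ q0 w s → Pre Q Δ q0 (TSym.ltr b :: w) (b :: s)
  | node {w₁ s₁ q w₂ s₂} : Pre Q Δ q0 w₁ s₁ → FASteps (faDelta Δ) q0 s₁ q → q ∈ Q →
      Pre Q Δ q0 w₂ s₂ →
      Pre Q Δ q0 (TSym.op :: (w₁ ++ TSym.cl :: w₂)) (q :: s₂)
  | run {a w₁ s₁ q w₂ s₂} : a ∈ Q → Pre Q Δ q0 w₁ s₁ → FASteps (faDelta Δ) a s₁ q → q ∈ Q →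
      Pre Q Δ q0 w₂ s₂ →
      Pre Q Δ q0 (TSym.op :: TSym.ltr a :: TSym.slash :: (w₁ ++ TSym.cl :: w₂)) (q :: s₂)

variable {Q : Set U} {Δ : Set (U × U × U)} {q0 : U}

lemma pre_sub {w s} (h : Pre Q Δ q0 w s) : ∀ b ∈ s, b ∈ Q := by
  induction h with
  | nil => simp
  | ltr hb _ ih =>
    intro x hx
    cases hx with
    | head => exact hb
    | tail _ h => exact ih _ h
  | node _ _ hq _ _ ih2 =>
    intro x hx
    cases hx with
    | head => exact hq
    | tail _ h => exact ih2 _ h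
  | run _ _ _ hq _ _ ih2 =>
    intro x hx
    cases hx with
    | head => exact hq
    | tail _ h => exact ih2 _ h

lemma pre_no_slash_head {w s} (h : Pre Q Δ q0 (TSym.slash :: w) s) : False := by
  cases h

lemma pre_nil_str {w} (h : Pre Q Δ q0 w []) : w = [] := by
  cases h; rfl

/-- `body` contains neither `⟨` nor `⟩`. -/
def NoOpCl (body : List (TSym U)) : Prop :=
  ∀ x ∈ body, x ≠ TSym.op ∧ x ≠ TSym.cl

lemma noOpCl_strOf (x : List U) : NoOpCl (strOf x) := by
  intro y hy
  simp only [strOf, List.mem_map] at hy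
  rcases hy with ⟨a, _, rfl⟩
  exact ⟨by simp, by simp⟩

lemma pre_flat_eq {w₁ s₁} (h : Pre Q Δ q0 w₁ s₁) :
    ∀ {body w₂ r : List (TSym U)}, NoOpCl body →
      w₁ ++ TSym.cl :: w₂ = body ++ TSym.cl :: r → w₁ = body ∧ w₂ = r := by
  induction h with
  | nil =>
    intro body w₂ r hb he
    cases body with
    | nil => simpa using he
    | cons x body' =>
      simp only [List.nil_append, List.cons_append, List.cons.injEq] at he
      exact absurd he.1.symm (hb x (by simp)).2
  | ltr hb' _ ih =>
    intro body w₂ r hb he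
    cases body with
    | nil => simp at he
    | cons x body' =>
      simp only [List.cons_append, List.cons.injEq] at he
      obtain ⟨h1, h2⟩ := ih (fun y hy => hb y (by simp [hy])) he.2
      exact ⟨by rw [h1, he.1], h2⟩
  | node _ _ _ _ _ _ =>
    intro body w₂ r hb he
    cases body with
    | nil => simp at he
    | cons x body' =>
      simp only [List.cons_append, List.cons.injEq] at he
      exact absurd he.1.symm (hb x (by simp)).1
  | run _ _ _ _ _ _ _ =>
    intro body w₂ r hb he
    cases body with
    | nil => simp at he
    | cons x body' =>
      simp only [List.cons_append, List.cons.injEq] at he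
      exact absurd he.1.symm (hb x (by simp)).1

lemma pre_strOf {x : List U} {s} (h : Pre Q Δ q0 (strOf x) s) : s = x := by
  induction x generalizing s with
  | nil => cases h; rfl
  | cons a x ih =>
    simp only [strOf, List.map_cons] at h
    cases h with
    | ltr hb h' => rw [ih h']

lemma pre_mk {x : List U} (hx : ∀ a ∈ x, a ∈ Q) : Pre Q Δ q0 (strOf x) x := by
  induction x with
  | nil => exact Pre.nil
  | cons a x ih =>
    exact Pre.ltr (hx a (by simp)) (ih fun b hb => hx b (by simp [hb]))

/-- Bracket counting. -/
def isOp : TSym U → Bool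
  | TSym.op => true
  | _ => false

def isCl : TSym U → Bool
  | TSym.cl => true
  | _ => false

/-- `w` is bracket-balanced. -/
def Bal (w : List (TSym U)) : Prop :=
  w.countP isCl = w.countP isOp ∧
    ∀ l r : List (TSym U), w = l ++ r → l.countP isCl ≤ l.countP isOp

lemma bal_nil : Bal ([] : List (TSym U)) := by
  constructor
  · rfl
  · intro l r h
    have : l = [] := by
      cases l <;> simp_all
    simp [this]

lemma countP_cons' (p : TSym U → Bool) (x : TSym U) (w : List (TSym U)) :
    (x :: w).countP p = (if p x then 1 else 0) + w.countP p := by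
  rw [List.countP_cons]; omega

lemma bal_cons_neutral {x : TSym U} (hop : isOp x = false) (hcl : isCl x = false)
    {w : List (TSym U)} (h : Bal w) : Bal (x :: w) := by
  obtain ⟨h1, h2⟩ := h
  constructor
  · simp [countP_cons', hop, hcl, h1]
  · intro l r he
    cases l with
    | nil => simp
    | cons y l' =>
      simp only [List.cons_append, List.cons.injEq] at he
      have := h2 l' r he.2
      obtain ⟨rfl, -⟩ := he
      simp [countP_cons', hop, hcl]
      omega

lemma bal_wrap {w₁ w₂ : List (TSym U)} (h1 : Bal w₁) (h2 : Bal w₂) :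
    Bal (TSym.op :: (w₁ ++ TSym.cl :: w₂)) := by
  obtain ⟨e1, p1⟩ := h1
  obtain ⟨e2, p2⟩ := h2
  constructor
  · simp [countP_cons', List.countP_append, isOp, isCl, e1, e2]
    omega
  · intro l r he
    cases l with
    | nil => simp
    | cons y l' =>
      simp only [List.cons_append, List.cons.injEq] at he
      obtain ⟨rfl, he2⟩ := he
      -- l' ++ r = w₁ ++ cl :: w₂
      rcases List.append_eq_append_iff.mp he2.symm with ⟨a', ha1, _⟩ | ⟨c', hc1, hc2⟩
      · -- w₁ = l' ++ a'
        have := p1 l' a' ha1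
        simp [countP_cons', isOp, isCl]
        omega
      · -- l' = w₁ ++ c', cl :: w₂ = c' ++ r
        cases c' with
        | nil =>
          simp only [List.append_nil] at hc1
          subst hc1
          simp [countP_cons', List.countP_append, isOp, isCl, e1]
        | cons z c'' =>
          simp only [List.cons_append, List.cons.injEq] at hc2
          obtain ⟨rfl, hc3⟩ := hc2
          have := p2 c'' r hc3
          subst hc1
          simp [countP_cons', List.countP_append, isOp, isCl, e1]
          omega

lemma bal_ltr_cons {b : U} {w : List (TSym U)} (h : Bal w) : Bal (TSym.ltr b :: w) :=
  bal_cons_neutral (by simp [isOp]) (by simp [isCl]) h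

lemma pre_bal {w s} (h : Pre Q Δ q0 w s) : Bal w := by
  induction h with
  | nil => exact bal_nil
  | ltr _ _ ih => exact bal_ltr_cons ih
  | node _ _ _ _ ih1 ih2 => exact bal_wrap ih1 ih2
  | @run a w₁ s₁ q w₂ s₂ _ _ _ _ _ ih1 ih2 =>
    have h1 : Bal (TSym.ltr a :: TSym.slash :: w₁) :=
      bal_ltr_cons (bal_cons_neutral (by simp [isOp]) (by simp [isCl]) ih1)
    simpa using bal_wrap h1 ih2

lemma bal_no_unclosed {w l m : List (TSym U)} (hb : Bal w)
    (he : w = l ++ TSym.op :: m) (hm : ∀ x ∈ m, x ≠ TSym.cl) : False := by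
  obtain ⟨e, p⟩ := hb
  have hml : m.countP isCl = 0 := by
    rw [List.countP_eq_zero]
    intro x hx
    have := hm x hx
    cases x <;> simp [isCl] at this ⊢
  have hp := p l (TSym.op :: m) he
  rw [he] at e
  simp [List.countP_append, countP_cons', isOp, isCl, hml] at e
  omega

lemma occ_cases2 {body : List (TSym U)} (hb : NoOpCl body) :
    ∀ {w₁ w₂ r : List (TSym U)}, w₁ ++ TSym.cl :: w₂ = body ++ TSym.cl :: r →
      (w₁ = body ∧ w₂ = r) ∨
      (∃ r₁, w₁ = body ++ TSym.cl :: r₁ ∧ r = r₁ ++ TSym.cl :: w₂) := by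
  induction body with
  | nil =>
    intro w₁ w₂ r he
    cases w₁ with
    | nil => simp_all
    | cons x w₁' =>
      simp only [List.nil_append, List.cons_append, List.cons.injEq] at he
      obtain ⟨rfl, he2⟩ := he
      exact Or.inr ⟨w₁', by simp, he2.symm⟩
  | cons y body' ih =>
    intro w₁ w₂ r he
    cases w₁ with
    | nil =>
      simp only [List.nil_append, List.cons_append, List.cons.injEq] at he
      exact absurd he.1.symm (hb y (by simp)).2
    | cons x w₁' =>
      simp only [List.cons_append, List.cons.injEq] at he
      obtain ⟨rfl, he2⟩ := he
      rcases ih (fun z hz => hb z (by simp [hz])) he2 with ⟨h1, h2⟩ | ⟨r₁, h1, h2⟩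
      · exact Or.inl ⟨by rw [h1], h2⟩
      · exact Or.inr ⟨r₁, by rw [h1]; rfl, h2⟩

lemma occ_cases {body : List (TSym U)} (hb : NoOpCl body) :
    ∀ {w₁ w₂ l r : List (TSym U)},
      w₁ ++ TSym.cl :: w₂ = l ++ (TSym.op :: (body ++ TSym.cl :: r)) →
      (∃ r₁, w₁ = l ++ (TSym.op :: (body ++ TSym.cl :: r₁)) ∧ r = r₁ ++ TSym.cl :: w₂) ∨
      (∃ l₂, l = w₁ ++ TSym.cl :: l₂ ∧ w₂ = l₂ ++ (TSym.op :: (body ++ TSym.cl :: r))) ∨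
      (w₁ = l ++ TSym.op :: body ∧ r = w₂) := by
  intro w₁
  induction w₁ with
  | nil =>
    intro w₂ l r he
    cases l with
    | nil => simp at he
    | cons y l' =>
      simp only [List.nil_append, List.cons_append, List.cons.injEq] at he
      obtain ⟨rfl, he2⟩ := he
      exact Or.inr (Or.inl ⟨l', by simp, he2⟩)
  | cons x w₁' ih =>
    intro w₂ l r he
    cases l with
    | nil =>
      simp only [List.nil_append, List.cons_append, List.cons.injEq] at he
      obtain ⟨rfl, he2⟩ := he
      rcases occ_cases2 hb he2 with ⟨h1, h2⟩ | ⟨r₁, h1, h2⟩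
      · exact Or.inr (Or.inr ⟨by rw [h1]; rfl, h2.symm⟩)
      · exact Or.inl ⟨r₁, by rw [h1]; rfl, h2⟩
    | cons y l' =>
      simp only [List.cons_append, List.cons.injEq] at he
      obtain ⟨rfl, he2⟩ := he
      rcases ih he2 with ⟨r₁, h1, h2⟩ | ⟨l₂, h1, h2⟩ | ⟨h1, h2⟩
      · exact Or.inl ⟨r₁, by rw [h1]; rfl, h2⟩
      · exact Or.inr (Or.inl ⟨l₂, by rw [h1]; rfl, h2⟩)
      · exact Or.inr (Or.inr ⟨by rw [h1]; rfl, h2⟩)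

lemma occ_ltr {X : U} :
    ∀ {w₁ w₂ l r : List (TSym U)},
      w₁ ++ TSym.cl :: w₂ = l ++ TSym.ltr X :: r →
      (∃ r₁, w₁ = l ++ TSym.ltr X :: r₁ ∧ r = r₁ ++ TSym.cl :: w₂) ∨
      (∃ l₂, l = w₁ ++ TSym.cl :: l₂ ∧ w₂ = l₂ ++ TSym.ltr X :: r) := by
  intro w₁
  induction w₁ with
  | nil =>
    intro w₂ l r he
    cases l with
    | nil => simp at he
    | cons y l' =>
      simp only [List.nil_append, List.cons_append, List.cons.injEq] at he
      obtain ⟨rfl, he2⟩ := he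
      exact Or.inr ⟨l', by simp, he2⟩
  | cons x w₁' ih =>
    intro w₂ l r he
    cases l with
    | nil =>
      simp only [List.nil_append, List.cons_append, List.cons.injEq] at he
      obtain ⟨rfl, he2⟩ := he
      exact Or.inl ⟨w₁', by simp, he2.symm⟩
    | cons y l' =>
      simp only [List.cons_append, List.cons.injEq] at he
      obtain ⟨rfl, he2⟩ := he
      rcases ih he2 with ⟨r₁, h1, h2⟩ | ⟨l₂, h1, h2⟩
      · exact Or.inl ⟨r₁, by rw [h1]; rfl, h2⟩
      · exact Or.inr ⟨l₂, by rw [h1]; rfl, h2⟩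

lemma swap_br {u s} (h : Pre Q Δ q0 u s) {body : List (TSym U)} (m' : List (TSym U))
    (hb : NoOpCl body)
    (hrepl : ∀ w₂ s₂, Pre Q Δ q0 (TSym.op :: (body ++ TSym.cl :: w₂)) s₂ →
      Pre Q Δ q0 (m' ++ w₂) s₂) :
    ∀ {l r : List (TSym U)}, u = l ++ (TSym.op :: (body ++ TSym.cl :: r)) →
      Pre Q Δ q0 (l ++ m' ++ r) s := by
  induction h with
  | nil => intro l r he; simp at he
  | @ltr b w s hbQ hw ih =>
    intro l r he
    cases l with
    | nil => simp at he
    | cons y l' =>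
      simp only [List.cons_append, List.cons.injEq] at he
      obtain ⟨rfl, he2⟩ := he
      simpa using Pre.ltr hbQ (ih he2)
  | @node w₁ s₁ q w₂ s₂ h₁ hfa hq h₂ ih1 ih2 =>
    intro l r he
    cases l with
    | nil =>
      simp only [List.nil_append, List.cons.injEq] at he
      obtain ⟨h1, h2⟩ := pre_flat_eq h₁ hb he.2
      subst h1; subst h2
      simpa using hrepl _ _ (Pre.node h₁ hfa hq h₂)
    | cons y l' =>
      simp only [List.cons_append, List.cons.injEq] at he
      obtain ⟨rfl, he2⟩ := he
      rcases occ_cases hb he2 with ⟨r₁, h1, h2⟩ | ⟨l₂, h1, h2⟩ | ⟨h1, h2⟩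
      · subst h2
        have := Pre.node (ih1 h1) hfa hq h₂
        simpa [List.append_assoc] using this
      · subst h1 h2
        have := Pre.node h₁ hfa hq (ih2 rfl)
        simpa [List.append_assoc] using this
      · exact absurd h1 (fun hh => bal_no_unclosed (pre_bal h₁) hh
          (fun x hx => (hb x hx).2))
  | @run a w₁ s₁ q w₂ s₂ haQ h₁ hfa hq h₂ ih1 ih2 =>
    intro l r he
    cases l with
    | nil =>
      simp only [List.nil_append, List.cons.injEq] at he
      obtain ⟨-, he2⟩ := he
      cases body with
      | nil => simp at he2
      | cons z body' =>
        simp only [List.cons_append, List.cons.injEq] at he2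
        obtain ⟨rfl, he3⟩ := he2
        cases body' with
        | nil => simp at he3
        | cons z' body'' =>
          simp only [List.cons_append, List.cons.injEq] at he3
          obtain ⟨rfl, he4⟩ := he3
          have hb'' : NoOpCl body'' := fun x hx => hb x (by simp [hx])
          obtain ⟨h1, h2⟩ := pre_flat_eq h₁ hb'' he4
          subst h1; subst h2
          simpa using hrepl _ _ (by simpa using Pre.run haQ h₁ hfa hq h₂)
    | cons y l' =>
      simp only [List.cons_append, List.cons.injEq] at he
      obtain ⟨rfl, he2⟩ := he
      cases l' with
      | nil => simp at he2
      | cons z l'' =>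
        simp only [List.cons_append, List.cons.injEq] at he2
        obtain ⟨rfl, he3⟩ := he2
        cases l'' with
        | nil => simp at he3
        | cons z' l''' =>
          simp only [List.cons_append, List.cons.injEq] at he3
          obtain ⟨rfl, he4⟩ := he3
          rcases occ_cases hb he4 with ⟨r₁, h1, h2⟩ | ⟨l₂, h1, h2⟩ | ⟨h1, h2⟩
          · subst h2
            have := Pre.run haQ (ih1 h1) hfa hq h₂
            simpa [List.append_assoc] using this
          · subst h1 h2
            have := Pre.run haQ h₁ hfa hq (ih2 rfl)
            simpa [List.append_assoc] using this
          · exact absurd h1 (fun hh => bal_no_unclosed (pre_bal h₁) hh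
              (fun x hx => (hb x hx).2))

lemma swap_ltr {u s} (h : Pre Q Δ q0 u s) {X : U} (m' : List (TSym U))
    (hrepl : ∀ w₂ s₂, Pre Q Δ q0 (TSym.ltr X :: w₂) s₂ → Pre Q Δ q0 (m' ++ w₂) s₂) :
    ∀ {l r : List (TSym U)}, u = l ++ TSym.ltr X :: r →
      (∀ r', r ≠ TSym.slash :: r') →
      Pre Q Δ q0 (l ++ m' ++ r) s := by
  induction h with
  | nil => intro l r he _; simp at he
  | @ltr b w s hbQ hw ih =>
    intro l r he hr
    cases l with
    | nil =>
      simp only [List.nil_append, List.cons.injEq] at he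
      obtain ⟨h1, rfl⟩ := he
      cases h1
      simpa using hrepl _ _ (Pre.ltr hbQ hw)
    | cons y l' =>
      simp only [List.cons_append, List.cons.injEq] at he
      obtain ⟨rfl, he2⟩ := he
      simpa using Pre.ltr hbQ (ih he2 hr)
  | @node w₁ s₁ q w₂ s₂ h₁ hfa hq h₂ ih1 ih2 =>
    intro l r he hr
    cases l with
    | nil => simp at he
    | cons y l' =>
      simp only [List.cons_append, List.cons.injEq] at he
      obtain ⟨rfl, he2⟩ := he
      rcases occ_ltr he2 with ⟨r₁, h1, h2⟩ | ⟨l₂, h1, h2⟩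
      · subst h2
        have hr' : ∀ r', r₁ ≠ TSym.slash :: r' := by
          intro r' hcon
          exact hr (r' ++ TSym.cl :: w₂) (by simp [hcon])
        have := Pre.node (ih1 h1 hr') hfa hq h₂
        simpa [List.append_assoc] using this
      · subst h1 h2
        have := Pre.node h₁ hfa hq (ih2 rfl hr)
        simpa [List.append_assoc] using this
  | @run a w₁ s₁ q w₂ s₂ haQ h₁ hfa hq h₂ ih1 ih2 =>
    intro l r he hr
    cases l with
    | nil => simp at he
    | cons y l' =>
      simp only [List.cons_append, List.cons.injEq] at he
      obtain ⟨rfl, he2⟩ := he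
      cases l' with
      | nil =>
        simp only [List.nil_append, List.cons.injEq] at he2
        exact absurd he2.2.symm (hr _)
      | cons z l'' =>
        simp only [List.cons_append, List.cons.injEq] at he2
        obtain ⟨rfl, he3⟩ := he2
        cases l'' with
        | nil => simp at he3
        | cons z' l''' =>
          simp only [List.cons_append, List.cons.injEq] at he3
          obtain ⟨rfl, he4⟩ := he3
          rcases occ_ltr he4 with ⟨r₁, h1, h2⟩ | ⟨l₂, h1, h2⟩
          · subst h2
            have hr' : ∀ r', r₁ ≠ TSym.slash :: r' := by
              intro r' hcon
              exact hr (r' ++ TSym.cl :: w₂) (by simp [hcon])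
            have := Pre.run haQ (ih1 h1 hr') hfa hq h₂
            simpa [List.append_assoc] using this
          · subst h1 h2
            have := Pre.run haQ h₁ hfa hq (ih2 rfl hr)
            simpa [List.append_assoc] using this

lemma gmove_ctx {Q0 : Set U} {Δ' : Set (U × U × U)} {γ : U → Set U} {w w' : List (TSym U)}
    (h : GMove Q0 Δ' γ w w') (p q : List (TSym U)) :
    GMove Q0 Δ' γ (p ++ w ++ q) (p ++ w' ++ q) := by
  cases h with
  | @init l r s a ha =>
    have := GMove.init (l := p ++ l) (r := r ++ q) (s := s) (γ := γ) (Δ := Δ') ha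
    simpa [List.append_assoc] using this
  | @horiz l r s a b c hd =>
    have := GMove.horiz (l := p ++ l) (r := r ++ q) (s := s) (γ := γ) (Q0 := Q0) hd
    simpa [List.append_assoc] using this
  | @vert l r a b hg =>
    have := GMove.vert (l := p ++ l) (r := r ++ q) (Δ := Δ') (Q0 := Q0) hg
    simpa [List.append_assoc] using this

lemma rtg_ctx {Q0 : Set U} {Δ' : Set (U × U × U)} {γ : U → Set U} {w w' : List (TSym U)}
    (h : Relation.ReflTransGen (GMove Q0 Δ' γ) w w') (p q : List (TSym U)) :
    Relation.ReflTransGen (GMove Q0 Δ' γ) (p ++ w ++ q) (p ++ w' ++ q) := by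
  induction h with
  | refl => exact .refl
  | tail _ hstep ih => exact .tail ih (gmove_ctx hstep p q)

lemma fa_moves {a : U} {x : List U} {q : U} (h : FASteps (faDelta Δ) a x q)
    (L R : List (TSym U)) :
    Relation.ReflTransGen (NMove q0 Δ)
      (L ++ TSym.op :: TSym.ltr a :: TSym.slash :: (strOf x ++ TSym.cl :: R))
      (L ++ TSym.op :: TSym.ltr q :: TSym.slash :: TSym.cl :: R) := by
  induction h with
  | nil =>
    simp only [strOf, List.map_nil, List.nil_append]
    exact .refl
  | @cons a' b p x' q' hp _ ih =>
    refine Relation.ReflTransGen.head ?_ ih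
    have hmv := GMove.horiz (l := L) (r := R) (s := x') (Q0 := ({q0} : Set U))
      (γ := fun a => ({a} : Set U)) hp
    simp only [strOf, List.map_cons] at hmv ⊢
    simp only [List.nil_append, List.cons_append, List.singleton_append, List.append_assoc,
      List.append_nil] at hmv
    exact hmv

lemma pre_reduces {w s} (h : Pre Q Δ q0 w s) :
    Relation.ReflTransGen (NMove q0 Δ) w (strOf s) := by
  induction h with
  | nil => exact .refl
  | @ltr b w s _ _ ih =>
    have := rtg_ctx ih [TSym.ltr b] []
    simpa [strOf, NMove] using this
  | @node w₁ s₁ q w₂ s₂ _ hfa _ _ ih1 ih2 =>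
    have t1 : Relation.ReflTransGen (NMove q0 Δ)
        (TSym.op :: (w₁ ++ TSym.cl :: w₂)) (TSym.op :: (strOf s₁ ++ TSym.cl :: w₂)) := by
      simpa [NMove] using rtg_ctx ih1 [TSym.op] (TSym.cl :: w₂)
    have t2 : NMove q0 Δ (TSym.op :: (strOf s₁ ++ TSym.cl :: w₂))
        (TSym.op :: TSym.ltr q0 :: TSym.slash :: (strOf s₁ ++ TSym.cl :: w₂)) := by
      have := GMove.init (l := []) (r := w₂) (s := s₁) (Δ := Δ) (Q0 := ({q0} : Set U))
        (γ := fun a => ({a} : Set U)) (a := q0) rfl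
      simp only [List.nil_append, List.cons_append, List.singleton_append, List.append_assoc, List.append_nil] at this
      exact this
    have t3 : Relation.ReflTransGen (NMove q0 Δ)
        (TSym.op :: TSym.ltr q0 :: TSym.slash :: (strOf s₁ ++ TSym.cl :: w₂))
        (TSym.op :: TSym.ltr q :: TSym.slash :: TSym.cl :: w₂) := by
      simpa using fa_moves hfa [] w₂
    have t4 : NMove q0 Δ (TSym.op :: TSym.ltr q :: TSym.slash :: TSym.cl :: w₂)
        (TSym.ltr q :: w₂) := by
      have := GMove.vert (l := []) (r := w₂) (Δ := Δ) (Q0 := ({q0} : Set U))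
        (γ := fun a => ({a} : Set U)) (a := q) (b := q) rfl
      simp only [List.nil_append, List.cons_append, List.singleton_append, List.append_assoc, List.append_nil] at this
      exact this
    have t5 : Relation.ReflTransGen (NMove q0 Δ) (TSym.ltr q :: w₂)
        (TSym.ltr q :: strOf s₂) := by
      simpa [NMove] using rtg_ctx ih2 [TSym.ltr q] []
    have total := t1.trans (Relation.ReflTransGen.head t2
      (t3.trans (Relation.ReflTransGen.head t4 t5)))
    simpa [strOf] using total
  | @run a w₁ s₁ q w₂ s₂ haQ _ hfa _ _ ih1 ih2 =>
    have t1 : Relation.ReflTransGen (NMove q0 Δ)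
        (TSym.op :: TSym.ltr a :: TSym.slash :: (w₁ ++ TSym.cl :: w₂))
        (TSym.op :: TSym.ltr a :: TSym.slash :: (strOf s₁ ++ TSym.cl :: w₂)) := by
      simpa [NMove] using rtg_ctx ih1 [TSym.op, TSym.ltr a, TSym.slash] (TSym.cl :: w₂)
    have t3 : Relation.ReflTransGen (NMove q0 Δ)
        (TSym.op :: TSym.ltr a :: TSym.slash :: (strOf s₁ ++ TSym.cl :: w₂))
        (TSym.op :: TSym.ltr q :: TSym.slash :: TSym.cl :: w₂) := by
      simpa using fa_moves hfa [] w₂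
    have t4 : NMove q0 Δ (TSym.op :: TSym.ltr q :: TSym.slash :: TSym.cl :: w₂)
        (TSym.ltr q :: w₂) := by
      have := GMove.vert (l := []) (r := w₂) (Δ := Δ) (Q0 := ({q0} : Set U))
        (γ := fun a => ({a} : Set U)) (a := q) (b := q) rfl
      simp only [List.nil_append, List.cons_append, List.singleton_append, List.append_assoc, List.append_nil] at this
      exact this
    have t5 : Relation.ReflTransGen (NMove q0 Δ) (TSym.ltr q :: w₂)
        (TSym.ltr q :: strOf s₂) := by
      simpa [NMove] using rtg_ctx ih2 [TSym.ltr q] []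
    have total := t1.trans (t3.trans (Relation.ReflTransGen.head t4 t5))
    simpa [strOf] using total

lemma pre_ltr_inv {b : U} {w : List (TSym U)} {s} (h : Pre Q Δ q0 (TSym.ltr b :: w) s) :
    ∃ s', s = b :: s' ∧ b ∈ Q ∧ Pre Q Δ q0 w s' := by
  cases h with
  | ltr hb hw => exact ⟨_, rfl, hb, hw⟩

lemma pre_op_inv {v : List (TSym U)} {s} (h : Pre Q Δ q0 (TSym.op :: v) s) :
    (∃ w₁ s₁ q w₂ s₂, v = w₁ ++ TSym.cl :: w₂ ∧ Pre Q Δ q0 w₁ s₁ ∧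
      FASteps (faDelta Δ) q0 s₁ q ∧ q ∈ Q ∧ Pre Q Δ q0 w₂ s₂ ∧ s = q :: s₂) ∨
    (∃ a w₁ s₁ q w₂ s₂, v = TSym.ltr a :: TSym.slash :: (w₁ ++ TSym.cl :: w₂) ∧ a ∈ Q ∧
      Pre Q Δ q0 w₁ s₁ ∧ FASteps (faDelta Δ) a s₁ q ∧ q ∈ Q ∧ Pre Q Δ q0 w₂ s₂ ∧
      s = q :: s₂) := by
  cases h with
  | node h₁ hfa hq h₂ => exact Or.inl ⟨_, _, _, _, _, rfl, h₁, hfa, hq, h₂, rfl⟩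
  | run ha h₁ hfa hq h₂ => exact Or.inr ⟨_, _, _, _, _, _, rfl, ha, h₁, hfa, hq, h₂, rfl⟩

lemma pre_accept {w : List (TSym U)} {q : U} (h : Pre Q Δ q0 w [q]) :
    w = [TSym.ltr q] ∨ Relation.ReflTransGen (NMove q0 Δ) w (finalTree q) := by
  cases h with
  | ltr hb hw =>
    rw [pre_nil_str hw]
    exact Or.inl rfl
  | @node w₁ s₁ _ w₂ s₂ h₁ hfa hq h₂ =>
    rw [pre_nil_str h₂]
    refine Or.inr ?_
    have t1 : Relation.ReflTransGen (NMove q0 Δ)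
        (TSym.op :: (w₁ ++ TSym.cl :: ([] : List (TSym U))))
        (TSym.op :: (strOf s₁ ++ TSym.cl :: ([] : List (TSym U)))) := by
      simpa [NMove] using rtg_ctx (pre_reduces h₁) [TSym.op] (TSym.cl :: [])
    have t2 : NMove q0 Δ (TSym.op :: (strOf s₁ ++ TSym.cl :: ([] : List (TSym U))))
        (TSym.op :: TSym.ltr q0 :: TSym.slash :: (strOf s₁ ++ TSym.cl :: ([] : List (TSym U)))) := by
      have := GMove.init (l := []) (r := []) (s := s₁) (Δ := Δ) (Q0 := ({q0} : Set U))
        (γ := fun a => ({a} : Set U)) (a := q0) rfl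
      simp only [List.nil_append, List.cons_append, List.singleton_append, List.append_assoc,
        List.append_nil] at this
      exact this
    have t3 : Relation.ReflTransGen (NMove q0 Δ)
        (TSym.op :: TSym.ltr q0 :: TSym.slash :: (strOf s₁ ++ TSym.cl :: ([] : List (TSym U))))
        (TSym.op :: TSym.ltr q :: TSym.slash :: TSym.cl :: ([] : List (TSym U))) := by
      simpa using fa_moves hfa [] []
    exact t1.trans (Relation.ReflTransGen.head t2 t3)
  | @run a w₁ s₁ _ w₂ s₂ ha h₁ hfa hq h₂ =>
    rw [pre_nil_str h₂]
    refine Or.inr ?_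
    have t1 : Relation.ReflTransGen (NMove q0 Δ)
        (TSym.op :: TSym.ltr a :: TSym.slash :: (w₁ ++ TSym.cl :: ([] : List (TSym U))))
        (TSym.op :: TSym.ltr a :: TSym.slash :: (strOf s₁ ++ TSym.cl :: ([] : List (TSym U)))) := by
      simpa [NMove] using rtg_ctx (pre_reduces h₁) [TSym.op, TSym.ltr a, TSym.slash] (TSym.cl :: [])
    have t3 : Relation.ReflTransGen (NMove q0 Δ)
        (TSym.op :: TSym.ltr a :: TSym.slash :: (strOf s₁ ++ TSym.cl :: ([] : List (TSym U))))
        (TSym.op :: TSym.ltr q :: TSym.slash :: TSym.cl :: ([] : List (TSym U))) := by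
      simpa using fa_moves hfa [] []
    exact t1.trans t3

variable {Sa Qf : Set U}

lemma step_back (hwf : NWF Sa Q Qf q0 Δ) {w w' : List (TSym U)} {s}
    (hmv : NMove q0 Δ w w')
    (hI : ∀ l r : List (TSym U), w ≠ l ++ TSym.cl :: TSym.slash :: r)
    (h : Pre Q Δ q0 w' s) : Pre Q Δ q0 w s := by
  obtain ⟨hQfin, hSaQ, hQfQ, hq0Q, hΔQ⟩ := hwf
  cases hmv with
  | @init l r x a ha =>
    replace ha : a = q0 := ha
    have hb : NoOpCl (TSym.ltr a :: TSym.slash :: strOf x) := by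
      intro y hy
      cases hy with
      | head => exact ⟨by simp, by simp⟩
      | tail _ hy' =>
        cases hy' with
        | head => exact ⟨by simp, by simp⟩
        | tail _ hy'' => exact noOpCl_strOf x y hy''
    have h' : Pre Q Δ q0 (l ++ (TSym.op :: ((TSym.ltr a :: TSym.slash :: strOf x)
        ++ TSym.cl :: r))) s := by
      simp only [List.cons_append, List.nil_append, List.singleton_append,
        List.append_assoc, List.append_nil] at h ⊢
      exact h
    have hres := swap_br h' (m' := TSym.op :: (strOf x ++ [TSym.cl])) hb ?_ rfl
    · simp only [List.cons_append, List.nil_append, List.singleton_append,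
        List.append_assoc, List.append_nil] at hres ⊢
      simpa using hres
    · intro w₂ s₂ hp
      have hp' : Pre Q Δ q0 (TSym.op :: TSym.ltr a :: TSym.slash ::
          (strOf x ++ TSym.cl :: w₂)) s₂ := by
        simpa using hp
      rcases pre_op_inv hp' with ⟨w₁, s₁, qq, w₂', s₂', hv, h₁, _, _, _, _⟩ |
        ⟨a', w₁, s₁, qq, w₂', s₂', hv, ha', h₁, hfa, hq, h₂, rfl⟩
      · obtain ⟨h1, -⟩ := pre_flat_eq h₁ hb (by simpa using hv.symm)
        subst h1
        have hinv := pre_ltr_inv h₁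
        obtain ⟨s', -, -, hcon⟩ := hinv
        exact absurd hcon pre_no_slash_head
      · simp only [List.cons.injEq] at hv
        obtain ⟨ha2, -, hv3⟩ := hv
        cases TSym.ltr.inj ha2
        obtain ⟨h1, h2⟩ := pre_flat_eq h₁ (noOpCl_strOf x) hv3.symm
        subst h1; subst h2
        have hx : s₁ = x := pre_strOf h₁
        rw [hx] at h₁ hfa
        rw [ha] at hfa
        have := Pre.node h₁ hfa hq h₂
        simpa using this
  | @horiz l r x a b c hd =>
    have hb : NoOpCl (TSym.ltr c :: TSym.slash :: strOf x) := by
      intro y hy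
      cases hy with
      | head => exact ⟨by simp, by simp⟩
      | tail _ hy' =>
        cases hy' with
        | head => exact ⟨by simp, by simp⟩
        | tail _ hy'' => exact noOpCl_strOf x y hy''
    have h' : Pre Q Δ q0 (l ++ (TSym.op :: ((TSym.ltr c :: TSym.slash :: strOf x)
        ++ TSym.cl :: r))) s := by
      simp only [List.cons_append, List.nil_append, List.singleton_append,
        List.append_assoc, List.append_nil] at h ⊢
      exact h
    have hres := swap_br h'
      (m' := TSym.op :: TSym.ltr a :: TSym.slash :: TSym.ltr b :: (strOf x ++ [TSym.cl]))
      hb ?_ rfl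
    · simp only [List.cons_append, List.nil_append, List.singleton_append,
        List.append_assoc, List.append_nil] at hres ⊢
      simpa using hres
    · intro w₂ s₂ hp
      have hp' : Pre Q Δ q0 (TSym.op :: TSym.ltr c :: TSym.slash ::
          (strOf x ++ TSym.cl :: w₂)) s₂ := by
        simpa using hp
      rcases pre_op_inv hp' with ⟨w₁, s₁, qq, w₂', s₂', hv, h₁, _, _, _, _⟩ |
        ⟨a', w₁, s₁, qq, w₂', s₂', hv, ha', h₁, hfa, hq, h₂, rfl⟩
      · obtain ⟨h1, -⟩ := pre_flat_eq h₁ hb (by simpa using hv.symm)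
        subst h1
        have hinv := pre_ltr_inv h₁
        obtain ⟨s', -, -, hcon⟩ := hinv
        exact absurd hcon pre_no_slash_head
      · simp only [List.cons.injEq] at hv
        obtain ⟨ha2, -, hv3⟩ := hv
        cases TSym.ltr.inj ha2
        obtain ⟨h1, h2⟩ := pre_flat_eq h₁ (noOpCl_strOf x) hv3.symm
        subst h1; subst h2
        have hx : s₁ = x := pre_strOf h₁
        rw [hx] at h₁ hfa
        have hrule := hΔQ _ hd
        have hfa' : FASteps (faDelta Δ) a (b :: x) qq :=
          FASteps.cons hd hfa
        have := Pre.run hrule.1 (Pre.ltr hrule.2.1 h₁) hfa' hq h₂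
        simpa using this
  | @vert l r a b hg =>
    replace hg : b = a := hg
    subst hg
    have hcond : ∀ r', r ≠ TSym.slash :: r' := by
      intro r' hcon
      exact hI (l ++ [TSym.op, TSym.ltr b, TSym.slash]) r'
        (by simp [hcon, List.append_assoc])
    have h' : Pre Q Δ q0 (l ++ TSym.ltr b :: r) s := by
      simpa using h
    have hres := swap_ltr h'
      (m' := [TSym.op, TSym.ltr b, TSym.slash, TSym.cl]) ?_ rfl hcond
    · simp only [List.cons_append, List.nil_append, List.singleton_append,
        List.append_assoc, List.append_nil] at hres ⊢
      simpa using hres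
    · intro w₂ s₂ hp
      obtain ⟨s₂', rfl, haQ, hw₂⟩ := pre_ltr_inv hp
      have := Pre.run haQ Pre.nil (FASteps.nil b) haQ hw₂
      simpa using this

/-- No `⟩/` substring. -/
def CSF (w : List (TSym U)) : Prop :=
  ∀ l r : List (TSym U), w ≠ l ++ TSym.cl :: TSym.slash :: r

lemma pair_split {α : Type} {x y : α} :
    ∀ {A B l r : List α}, A ++ B = l ++ x :: y :: r →
      (∃ r', A = l ++ x :: y :: r' ∧ r = r' ++ B) ∨
      (A = l ++ [x] ∧ B = y :: r) ∨
      (∃ l', l = A ++ l' ∧ B = l' ++ x :: y :: r) := by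
  intro A
  induction A with
  | nil =>
    intro B l r h
    exact Or.inr (Or.inr ⟨l, rfl, by simpa using h⟩)
  | cons a A' ih =>
    intro B l r h
    cases l with
    | nil =>
      simp only [List.nil_append, List.cons_append, List.cons.injEq] at h
      obtain ⟨rfl, h2⟩ := h
      cases A' with
      | nil => exact Or.inr (Or.inl ⟨rfl, by simpa using h2⟩)
      | cons a' A'' =>
        simp only [List.cons_append, List.cons.injEq] at h2
        obtain ⟨rfl, h3⟩ := h2
        exact Or.inl ⟨A'', by simp, h3.symm⟩
    | cons c l' =>
      simp only [List.cons_append, List.cons.injEq] at h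
      obtain ⟨rfl, h2⟩ := h
      rcases ih h2 with ⟨r', h3, h4⟩ | ⟨h3, h4⟩ | ⟨l'', h3, h4⟩
      · exact Or.inl ⟨r', by rw [h3]; rfl, h4⟩
      · exact Or.inr (Or.inl ⟨by rw [h3]; rfl, h4⟩)
      · exact Or.inr (Or.inr ⟨l'', by rw [h3]; rfl, h4⟩)

lemma slash_not_strOf {x : List U} : TSym.slash ∉ strOf x := by
  simp only [strOf, List.mem_map]
  rintro ⟨a, -, h⟩
  cases h

lemma cl_not_strOf {x : List U} : TSym.cl ∉ strOf x := by
  simp only [strOf, List.mem_map]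
  rintro ⟨a, -, h⟩
  cases h

/-- Splitting helper: the pair `x::y::` inside `strOf x₀ ++ cl :: R`
with `x = cl`, `y = slash` must be at the boundary or inside `R`. -/
lemma pair_in_flat_tail {x₀ : List U} {R l r : List (TSym U)}
    (h : strOf x₀ ++ TSym.cl :: R = l ++ TSym.cl :: TSym.slash :: r) :
    (R = TSym.slash :: r ∧ l = strOf x₀) ∨
    (∃ l₄, R = l₄ ++ TSym.cl :: TSym.slash :: r ∧ l = strOf x₀ ++ TSym.cl :: l₄) := by
  rcases pair_split h with ⟨r', h1, h2⟩ | ⟨h1, h2⟩ | ⟨l', h1, h2⟩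
  · exact absurd (h1 ▸ (by simp : TSym.cl ∈ l ++ TSym.cl :: TSym.slash :: r')) cl_not_strOf
  · exact absurd (h1 ▸ (by simp : TSym.cl ∈ l ++ [TSym.cl])) cl_not_strOf
  · cases l' with
    | nil =>
      simp only [List.nil_append, List.cons.injEq] at h2
      exact Or.inl ⟨h2.2, by simpa using h1⟩
    | cons z l₄ =>
      simp only [List.cons_append, List.cons.injEq] at h2
      obtain ⟨rfl, h3⟩ := h2
      exact Or.inr ⟨l₄, h3, by simpa using h1⟩

lemma csf_fwd {w w' : List (TSym U)} (hmv : NMove q0 Δ w w') (hf : CSF w) : CSF w' := by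
  cases hmv with
  | @init L R x a ha =>
    intro l r heq
    simp only [List.append_assoc, List.cons_append, List.nil_append,
      List.singleton_append] at heq
    rcases pair_split heq with ⟨r', h1, h2⟩ | ⟨h1, h2⟩ | ⟨l', h1, h2⟩
    · exact hf l (r' ++ ([TSym.op] ++ strOf x ++ [TSym.cl] ++ R))
        (by rw [h1]; simp [List.append_assoc])
    · simp at h2
    · cases l' with
      | nil => simp at h2
      | cons z1 l1 =>
        simp only [List.cons_append, List.cons.injEq] at h2
        obtain ⟨rfl, h3⟩ := h2
        cases l1 with
        | nil => simp at h3
        | cons z2 l2 =>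
          simp only [List.cons_append, List.cons.injEq] at h3
          obtain ⟨rfl, h4⟩ := h3
          cases l2 with
          | nil => simp at h4
          | cons z3 l3 =>
            simp only [List.cons_append, List.cons.injEq] at h4
            obtain ⟨rfl, h5⟩ := h4
            rcases pair_in_flat_tail h5 with ⟨hR, -⟩ | ⟨l₄, hR, -⟩
            · exact hf (L ++ TSym.op :: strOf x)
                r (by rw [hR]; simp [List.append_assoc])
            · exact hf (L ++ TSym.op :: strOf x ++ TSym.cl :: l₄)
                r (by rw [hR]; simp [List.append_assoc])
  | @horiz L R x a b c hd =>
    intro l r heq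
    simp only [List.append_assoc, List.cons_append, List.nil_append,
      List.singleton_append] at heq
    rcases pair_split heq with ⟨r', h1, h2⟩ | ⟨h1, h2⟩ | ⟨l', h1, h2⟩
    · exact hf l (r' ++ ([TSym.op, TSym.ltr a, TSym.slash, TSym.ltr b] ++ strOf x
        ++ [TSym.cl] ++ R)) (by rw [h1]; simp [List.append_assoc])
    · simp at h2
    · cases l' with
      | nil => simp at h2
      | cons z1 l1 =>
        simp only [List.cons_append, List.cons.injEq] at h2
        obtain ⟨rfl, h3⟩ := h2
        cases l1 with
        | nil => simp at h3
        | cons z2 l2 =>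
          simp only [List.cons_append, List.cons.injEq] at h3
          obtain ⟨rfl, h4⟩ := h3
          cases l2 with
          | nil => simp at h4
          | cons z3 l3 =>
            simp only [List.cons_append, List.cons.injEq] at h4
            obtain ⟨rfl, h5⟩ := h4
            rcases pair_in_flat_tail h5 with ⟨hR, -⟩ | ⟨l₄, hR, -⟩
            · exact hf (L ++ TSym.op :: TSym.ltr a :: TSym.slash :: TSym.ltr b :: strOf x)
                r (by rw [hR]; simp [List.append_assoc])
            · exact hf (L ++ TSym.op :: TSym.ltr a :: TSym.slash :: TSym.ltr b :: strOf x
                ++ TSym.cl :: l₄) r (by rw [hR]; simp [List.append_assoc])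
  | @vert L R a b hg =>
    intro l r heq
    simp only [List.append_assoc, List.cons_append, List.nil_append,
      List.singleton_append] at heq
    rcases pair_split heq with ⟨r', h1, h2⟩ | ⟨h1, h2⟩ | ⟨l', h1, h2⟩
    · exact hf l (r' ++ ([TSym.op, TSym.ltr a, TSym.slash, TSym.cl] ++ R))
        (by rw [h1]; simp [List.append_assoc])
    · simp at h2
    · cases l' with
      | nil => simp at h2
      | cons z1 l1 =>
        simp only [List.cons_append, List.cons.injEq] at h2
        obtain ⟨rfl, h3⟩ := h2
        exact hf (L ++ TSym.op :: TSym.ltr a :: TSym.slash :: TSym.cl :: l1)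
          r (by rw [h3]; simp [List.append_assoc])

lemma accept_pre (hwf : NWF Sa Q Qf q0 Δ) {qf : U} (hqf : qf ∈ Q) :
    ∀ {w : List (TSym U)}, Relation.ReflTransGen (NMove q0 Δ) w (finalTree qf) →
      CSF w → Pre Q Δ q0 w [qf] := by
  intro w h
  induction h using Relation.ReflTransGen.head_induction_on with
  | refl =>
    intro _
    have := Pre.run (Q := Q) (Δ := Δ) (q0 := q0) hqf Pre.nil (FASteps.nil qf) hqf Pre.nil
    simpa [finalTree] using this
  | head hstep _ ih =>
    intro hcsf
    exact step_back hwf hstep hcsf (ih (csf_fwd hstep hcsf))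

lemma tree_shape {St : Set (TSym U)} {t : List (TSym U)} (h : IsTree St t) :
    ∃ w, t = TSym.op :: (w ++ [TSym.cl]) := by
  cases h with
  | nil => exact ⟨[], rfl⟩
  | single hx => exact ⟨[_], rfl⟩
  | concat h1 h2 => exact ⟨_, rfl⟩
  | encap h1 => exact ⟨_, rfl⟩

lemma tree_no_slash {S : Set U} {t : List (TSym U)} (h : t ∈ TreeSet S) :
    TSym.slash ∉ t := by
  induction h with
  | nil => simp
  | single hx =>
    obtain ⟨a, -, rfl⟩ := hx
    simp
  | concat h1 h2 ih1 ih2 =>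
    intro hmem
    simp only [List.mem_cons, List.mem_append] at hmem ih1 ih2
    tauto
  | encap h1 ih =>
    intro hmem
    simp only [List.mem_cons, List.mem_append] at hmem ih
    rcases hmem with h | h
    · cases h
    rcases h with h | h
    · exact ih h
    · simp at h

lemma pre_mem_ltr {w s} (h : Pre Q Δ q0 w s) : ∀ b : U, TSym.ltr b ∈ w → b ∈ Q := by
  induction h with
  | nil => simp
  | @ltr b' w' s' hb _ ih =>
    intro b hmem
    rcases List.mem_cons.mp hmem with h | h
    · cases TSym.ltr.inj h; exact hb
    · exact ih b h
  | node _ _ hq _ ih1 ih2 =>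
    intro b hmem
    simp only [List.mem_cons, List.mem_append] at hmem
    rcases hmem with h | h | h | h <;>
      first
        | exact ih1 b h
        | exact ih2 b h
        | cases h
  | @run a _ _ q _ _ ha _ _ hq _ ih1 ih2 =>
    intro b hmem
    simp only [List.mem_cons, List.mem_append] at hmem
    rcases hmem with h | h | h | h | h | h <;>
      first
        | exact ih1 b h
        | exact ih2 b h
        | (cases TSym.ltr.inj h; exact ha)
        | cases h

lemma fa_pure (hpure : PureN Sa Q Qf q0 Δ) {a : U} {s : List U} {q : U}
    (h : FASteps (faDelta Δ) a s q) : q = a ∨ q ∉ Sa := by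
  induction h with
  | nil => exact Or.inl rfl
  | @cons a' b p s' q' hp _ ih =>
    refine Or.inr ?_
    have hpSa : p ∉ Sa := (hpure.1 _ hp).2
    rcases ih with rfl | h
    · exact hpSa
    · exact h

section Gram

variable (Sa : Set U) (Q Qf : Set U) (q0 : U) (Δ : Set (U × U × U)) (S : U)
variable (e : U → RegularExpression U) (eS : RegularExpression U)

/-- The rule set of the grammar built from the automaton. -/
def Rg : Set (U × RegularExpression U) :=
  {p | ∃ n ∈ Q \ Sa, p = (n, e n)} ∪ {(S, eS)}

variable {Sa Q Qf q0 Δ S e eS}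

lemma gderiv_ctx {R : Set (U × RegularExpression U)} {u v : List (TSym U)}
    (h : GDeriv R u v) (p q : List (TSym U)) : GDeriv R (p ++ u ++ q) (p ++ v ++ q) := by
  obtain ⟨l, r, X, e', x, hrule, hx, hu, hv⟩ := h
  exact ⟨p ++ l, r ++ q, X, e', x, hrule, hx,
    by rw [hu]; simp [List.append_assoc], by rw [hv]; simp [List.append_assoc]⟩

lemma rtg_gderiv_ctx {R : Set (U × RegularExpression U)} {u v : List (TSym U)}
    (h : Relation.ReflTransGen (GDeriv R) u v) (p q : List (TSym U)) :
    Relation.ReflTransGen (GDeriv R) (p ++ u ++ q) (p ++ v ++ q) := by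
  induction h with
  | refl => exact .refl
  | tail _ hstep ih => exact .tail ih (gderiv_ctx hstep p q)

lemma gstep_pre (hwf : NWF Sa Q Qf q0 Δ) (hS : S ∉ Q)
    (he : ∀ n ∈ Q \ Sa, (e n).matches' = FALang Q (faDelta Δ) q0 {n})
    {u v : List (TSym U)} {s : List U}
    (hd : GDeriv (Rg Sa Q S e eS) u v) (hsl : TSym.slash ∉ u)
    (hp : Pre Q Δ q0 u s) : Pre Q Δ q0 v s ∧ TSym.slash ∉ v := by
  obtain ⟨l, r, X, e', x, hrule, hx, hu, hv⟩ := hd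
  have hXQ : X ∈ Q := pre_mem_ltr hp X (by rw [hu]; simp)
  rcases hrule with ⟨n, hn, heq⟩ | heq
  · obtain ⟨hXn, hee⟩ := Prod.mk.inj heq
    subst hee
    rw [hXn] at hu hXQ
    rw [he n hn] at hx
    obtain ⟨hxQ, n', hn', hsteps⟩ := hx
    have hsteps' : FASteps (faDelta Δ) q0 x n := (show n' = n from hn') ▸ hsteps
    have hcond : ∀ r', r ≠ TSym.slash :: r' := by
      intro r' hcon
      exact hsl (by rw [hu, hcon]; simp)
    have hrepl : ∀ w₂ s₂, Pre Q Δ q0 (TSym.ltr n :: w₂) s₂ →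
        Pre Q Δ q0 ((TSym.op :: (strOf x ++ [TSym.cl])) ++ w₂) s₂ := by
      intro w₂ s₂ hp2
      obtain ⟨s₂', rfl, hnQ, hw₂⟩ := pre_ltr_inv hp2
      have := Pre.node (pre_mk hxQ) hsteps' hnQ hw₂
      simpa using this
    have hres := swap_ltr hp (m' := TSym.op :: (strOf x ++ [TSym.cl])) hrepl
      (l := l) (r := r) (by rw [hu]; simp) hcond
    constructor
    · rw [hv]; exact hres
    · rw [hv]
      intro hmem
      simp only [List.mem_append, List.mem_cons] at hmem
      rcases hmem with (h | h) | h
      · exact hsl (by rw [hu]; simp [h])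
      · rcases h with h | h
        · cases h
        rcases h with h | h | h
        · exact slash_not_strOf h
        · cases h
        · simp at h
      · exact hsl (by rw [hu]; simp [h])
  · have heq' : X = S ∧ e' = eS := Prod.mk.inj heq
    exact absurd (heq'.1 ▸ hXQ) hS

lemma pre_gderiv (hwf : NWF Sa Q Qf q0 Δ) (hpure : PureN Sa Q Qf q0 Δ)
    (he : ∀ n ∈ Q \ Sa, (e n).matches' = FALang Q (faDelta Δ) q0 {n})
    {w : List (TSym U)} {s : List U}
    (hp : Pre Q Δ q0 w s) (hsl : TSym.slash ∉ w) :
    Relation.ReflTransGen (GDeriv (Rg Sa Q S e eS)) (strOf s) w := by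
  induction hp with
  | nil => exact .refl
  | @ltr b w' s' hb hw ih =>
    have hsl' : TSym.slash ∉ w' := fun h => hsl (by simp [h])
    have := rtg_gderiv_ctx (ih hsl') [TSym.ltr b] []
    simpa [strOf] using this
  | @node w₁ s₁ q w₂ s₂ h₁ hfa hq h₂ ih1 ih2 =>
    have hsl1 : TSym.slash ∉ w₁ := fun h => hsl (by simp [h])
    have hsl2 : TSym.slash ∉ w₂ := fun h => hsl (by simp [h])
    have hqSa : q ∉ Sa := by
      rcases fa_pure hpure hfa with rfl | h
      · exact hpure.2.1.2
      · exact h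
    have step1 : GDeriv (Rg Sa Q S e eS) (strOf (q :: s₂))
        ((TSym.op :: (strOf s₁ ++ [TSym.cl])) ++ strOf s₂) := by
      refine ⟨[], strOf s₂, q, e q, s₁, Or.inl ⟨q, ⟨hq, hqSa⟩, rfl⟩, ?_, by simp [strOf], rfl⟩
      rw [he q ⟨hq, hqSa⟩]
      exact ⟨pre_sub h₁, q, rfl, hfa⟩
    have t2 : Relation.ReflTransGen (GDeriv (Rg Sa Q S e eS))
        ((TSym.op :: (strOf s₁ ++ [TSym.cl])) ++ strOf s₂)
        ((TSym.op :: (w₁ ++ [TSym.cl])) ++ strOf s₂) := by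
      have := rtg_gderiv_ctx (ih1 hsl1) [TSym.op] ([TSym.cl] ++ strOf s₂)
      simpa [List.append_assoc] using this
    have t3 : Relation.ReflTransGen (GDeriv (Rg Sa Q S e eS))
        ((TSym.op :: (w₁ ++ [TSym.cl])) ++ strOf s₂)
        (TSym.op :: (w₁ ++ TSym.cl :: w₂)) := by
      have := rtg_gderiv_ctx (ih2 hsl2) (TSym.op :: (w₁ ++ [TSym.cl])) []
      simpa [List.append_assoc] using this
    exact Relation.ReflTransGen.head step1 (t2.trans t3)
  | run ha h₁ hfa hq h₂ ih1 ih2 =>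
    exact absurd (by simp : TSym.slash ∈ _) hsl

end Gram

end Aux

/-- automaton-to-grammar direction: for any finite string
tree automaton with pure states `A = (Σ, Q, Q_f, q₀, Δ)` there exists a
regular string tree grammar generating `L(A)`; concretely, one may take
`N = (Q ∖ Σ) ∪ {S}` with `S` fresh, for each `n ∈ Q ∖ Σ` a regular
expression `e n` over `Q` equivalent to the finite string automaton
`(Q, Q ∖ Σ, {n}, q₀, Δ)`, a regular expression `eS` equivalent to
`(Q, Q ∖ Σ, Q_f, q₀, Δ)`, and `R = ⋃_n {n → ⟨e n⟩} ∪ {S → ⟨eS⟩}`;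
then `L(G) = L(A)`. -/
theorem automaton_to_grammar {U : Type} (Sa Q Qf : Set U) (q0 : U)
    (Δ : Set (U × U × U)) (hwf : NWF Sa Q Qf q0 Δ)
    (hpure : PureN Sa Q Qf q0 Δ)
    (S : U) (hS : S ∉ Q)
    (e : U → RegularExpression U) (eS : RegularExpression U)
    (he : ∀ n ∈ Q \ Sa, (e n).matches' = FALang Q (faDelta Δ) q0 {n})
    (heS : eS.matches' = FALang Q (faDelta Δ) q0 Qf) :
    GramLang Sa S ({p | ∃ n ∈ Q \ Sa, p = (n, e n)} ∪ {(S, eS)})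
      = NLang Sa q0 Δ Qf := by
  have hq0Q : q0 ∈ Q := hwf.2.2.2.1
  have hQfQ : Qf ⊆ Q := hwf.2.2.1
  show GramLang Sa S (Rg Sa Q S e eS) = NLang Sa q0 Δ Qf
  ext t
  simp only [GramLang, NLang, GLang, GAccepts, Set.mem_setOf_eq]
  constructor
  · rintro ⟨htree, hder⟩
    refine ⟨htree, ?_⟩
    obtain ⟨w0, hshape⟩ := tree_shape htree
    rcases Relation.ReflTransGen.cases_head hder with heq | ⟨w₁, hstep, hrest⟩
    · rw [hshape] at heq
      simp at heq
    · obtain ⟨l, r, X, e', x, hrule, hx, hu, hv⟩ := hstep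
      have hlXr : l = [] ∧ X = S ∧ r = [] := by
        cases l with
        | nil =>
          simp only [List.nil_append, List.singleton_append, List.cons.injEq] at hu
          exact ⟨rfl, (TSym.ltr.inj hu.1).symm, hu.2.symm⟩
        | cons y l' => simp at hu
      obtain ⟨rfl, hXS, rfl⟩ := hlXr
      rcases hrule with ⟨n, hn, heq⟩ | heq
      · obtain ⟨hXn, -⟩ := Prod.mk.inj heq
        refine absurd ?_ hS
        rw [hXS.symm.trans hXn]
        exact hn.1
      · have heq' : (X, e') = (S, eS) := heq
        obtain ⟨-, hee⟩ := Prod.mk.inj heq'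
        rw [hee, heS] at hx
        obtain ⟨hxQ, qf, hqf, hsteps⟩ := hx
        have hw₁ : w₁ = TSym.op :: (strOf x ++ [TSym.cl]) := by rw [hv]; simp
        have hpre1 : Pre Q Δ q0 w₁ [qf] := by
          rw [hw₁]
          exact Pre.node (pre_mk hxQ) hsteps (hQfQ hqf) Pre.nil
        have hsl1 : TSym.slash ∉ w₁ := by
          rw [hw₁]
          intro hm
          simp [strOf] at hm
        have hinv : ∀ {u v : List (TSym U)},
            Relation.ReflTransGen (GDeriv (Rg Sa Q S e eS)) u v →
            Pre Q Δ q0 u [qf] ∧ TSym.slash ∉ u →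
            Pre Q Δ q0 v [qf] ∧ TSym.slash ∉ v := by
          intro u v h
          induction h with
          | refl => exact id
          | tail _ hstep ih =>
            intro hu'
            obtain ⟨hp', hsl'⟩ := ih hu'
            exact gstep_pre hwf hS he hstep hsl' hp'
        obtain ⟨hpret, hslt⟩ := hinv hrest ⟨hpre1, hsl1⟩
        rcases pre_accept hpret with heq2 | hred
        · rw [hshape] at heq2
          simp at heq2
        · exact ⟨qf, hqf, hred⟩
  · rintro ⟨htree, qf, hqf, hred⟩
    refine ⟨htree, ?_⟩
    have hslt : TSym.slash ∉ t := tree_no_slash htree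
    have hcsf : CSF t := fun l r hteq => hslt (by rw [hteq]; simp)
    have hpret : Pre Q Δ q0 t [qf] := accept_pre hwf (hQfQ hqf) hred hcsf
    obtain ⟨w0, hshape⟩ := tree_shape htree
    rw [hshape] at hpret
    rcases pre_op_inv hpret with
      ⟨w₁, s₁, q, w₂, s₂, hveq, h₁, hfa, hqQ, h₂, hseq⟩ |
      ⟨a, w₁, s₁, q, w₂, s₂, hveq, -, -, -, -, -, -⟩
    · obtain ⟨hq1, hs2⟩ : qf = q ∧ [] = s₂ := by
        simpa using hseq
      subst hq1
      have hw₂ : w₂ = [] := pre_nil_str (hs2 ▸ h₂)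
      subst hw₂
      have hteq : t = TSym.op :: (w₁ ++ [TSym.cl]) := by
        rw [hshape, hveq]
      have hslw₁ : TSym.slash ∉ w₁ := by
        intro hm
        exact hslt (by rw [hteq]; simp [hm])
      have step1 : GDeriv (Rg Sa Q S e eS) [TSym.ltr S]
          (TSym.op :: (strOf s₁ ++ [TSym.cl])) := by
        refine ⟨[], [], S, eS, s₁, Or.inr rfl, ?_, by simp, by simp⟩
        rw [heS]
        exact ⟨pre_sub h₁, qf, hqf, hfa⟩
      have t2 : Relation.ReflTransGen (GDeriv (Rg Sa Q S e eS))
          (TSym.op :: (strOf s₁ ++ [TSym.cl])) (TSym.op :: (w₁ ++ [TSym.cl])) := by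
        have := rtg_gderiv_ctx (pre_gderiv (S := S) (eS := eS) hwf hpure he h₁ hslw₁) [TSym.op] [TSym.cl]
        simpa using this
      rw [hteq]
      exact Relation.ReflTransGen.head step1 t2
    · exfalso
      apply hslt
      rw [hshape, hveq]
      simp

end StringTree
end

section
/- Subset-construction step correspondence: let A = (Σ, Q, Q_f, Q₀, Δ, γ) be a GNFSTA with pure states and A' = (Σ', 2^Q, Q'_f, Q₀, Δ') the subset-construction DFSTA (with Σ' = {{a} | a ∈ Σ}, Q'_f = {q' | q' ∩ Q_f ≠ ∅}, Δ'(a', b') = {c | (a,b) → c ∈ Δ, a ∈ a', b ∈ γ(b')}, where γ is extended by γ(a) = {a} for a ∈ Σ and unions over sets). For t ∈ T(Σ) with counterpart t' ∈ T(Σ'), let stepsⁿ_A(t) = {v | t ⇒ⁿ v} and stepsⁿ_{A'}(t') = {v' | t' ⇒ⁿ_{A'} v'}. Then for every n: every v ∈ stepsⁿ_A(t) is an instance of Γ(v') for some v' ∈ stepsⁿ_{A'}(t'), and conversely, for every v' ∈ stepsⁿ_{A'}(t'), every instance of Γ(v') belongs to stepsⁿ_A(t). -/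
/-! The invariant relating a tree `v` of `A` to a tree `v'` of the subset automaton `A'` is
`v ⊴ Γ(v')`. `Γ` acts on each symbol with one symbol of lookahead, so it commutes with
concatenation wherever the right-hand part does not start with a slash. Hence a redex `l⟨x⟩r` of
either automaton sits at the same position in the related tree, a move of `A` at it is matched
by the move of `A'` at the corresponding redex, and conversely; induction gives this for `n`
moves. Matching vertical moves also needs that in the trees of `A'` every slash follows a set of
states disjoint from `Σ`. Finally, the counterpart `t'` of `t ∈ T(Σ)` has no slash and `Γ` fixes
each `{a}` with `a ∈ Σ`, so `Γ(t') = t'`, whose only instance is `t`. -/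

namespace StringTree

variable {U : Type}

section GammaMap

variable (g : Set U → Set U)

def gammaSym (x : TSym (Set U)) : Option (TSym (Set U)) → TSym (Set U)
  | some TSym.slash => x
  | _ => symRel g x

@[simp] theorem gammaSym_slash (n : Option (TSym (Set U))) :
    gammaSym g TSym.slash n = TSym.slash := by
  rcases n with _ | ⟨_ | _ | _ | _⟩ <;> rfl

theorem gammaSym_of_ne_slash (x : TSym (Set U)) {n : Option (TSym (Set U))}
    (h : n ≠ some TSym.slash) : gammaSym g x n = symRel g x := by
  rcases n with _ | ⟨_ | _ | _ | _⟩ <;> simp_all [gammaSym]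

theorem gammaMap_cons (x : TSym (Set U)) (s : List (TSym (Set U))) :
    GammaMap g (x :: s) = gammaSym g x s.head? :: GammaMap g s := by
  rcases x with _ | _ | _ | A <;> rcases s with _ | ⟨_ | _ | _ | B, s⟩ <;>
    simp [GammaMap, gammaSym, symRel]

theorem gammaMap_append (x : List (TSym (Set U))) {y : List (TSym (Set U))}
    (hy : y.head? ≠ some TSym.slash) :
    GammaMap g (x ++ y) = GammaMap g x ++ GammaMap g y := by
  induction x with
  | nil => rfl
  | cons a x ih => cases x <;> simp_all [gammaMap_cons, gammaSym_of_ne_slash, GammaMap]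

theorem gammaMap_strOf (As : List (Set U)) : GammaMap g (strOf As) = strOf (As.map g) := by
  induction As with
  | nil => rfl
  | cons A As ih => cases As <;> simp_all [strOf, gammaMap_cons, gammaSym, symRel]

theorem gammaMap_eq_treeRel {s : List (TSym (Set U))} (hs : TSym.slash ∉ s) :
    GammaMap g s = treeRel g s := by
  induction s with
  | nil => rfl
  | cons x s ih =>
    rw [List.mem_cons, not_or] at hs
    rw [gammaMap_cons, ih hs.2, gammaSym_of_ne_slash _ _ (hs.2 ∘ List.mem_of_mem_head?)]
    rfl

theorem gammaMap_strOf_append (As : List (Set U)) {y : List (TSym (Set U))}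
    (hy : y.head? ≠ some TSym.slash) :
    GammaMap g (strOf As ++ y) = strOf (As.map g) ++ GammaMap g y := by
  rw [gammaMap_append g _ hy, gammaMap_strOf]

theorem gammaMap_append_node (l : List (TSym (Set U))) (As : List (Set U))
    (r : List (TSym (Set U))) :
    GammaMap g (l ++ TSym.op :: (strOf As ++ TSym.cl :: r)) =
      GammaMap g l ++ TSym.op :: (strOf (As.map g) ++ TSym.cl :: GammaMap g r) := by
  rw [gammaMap_append g l (by simp)]
  exact congrArg (GammaMap g l ++ TSym.op :: ·) (gammaMap_strOf_append g As (by simp))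

theorem gammaMap_append_stateNode (l : List (TSym (Set U))) (A : Set U) (As : List (Set U))
    (r : List (TSym (Set U))) :
    GammaMap g (l ++ TSym.op :: TSym.ltr A :: TSym.slash :: (strOf As ++ TSym.cl :: r)) =
      GammaMap g l ++ TSym.op :: TSym.ltr A :: TSym.slash ::
        (strOf (As.map g) ++ TSym.cl :: GammaMap g r) := by
  rw [gammaMap_append g l (by simp)]
  exact congrArg (GammaMap g l ++ TSym.op :: TSym.ltr A :: TSym.slash :: ·)
    (gammaMap_strOf_append g As (by simp))

theorem gammaMap_append_finishedNode (l : List (TSym (Set U))) (A : Set U)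
    (r : List (TSym (Set U))) :
    GammaMap g (l ++ TSym.op :: TSym.ltr A :: TSym.slash :: TSym.cl :: r) =
      GammaMap g l ++ TSym.op :: TSym.ltr A :: TSym.slash :: TSym.cl :: GammaMap g r :=
  gammaMap_append_stateNode g l A [] r

theorem gammaMap_append_ltr (l : List (TSym (Set U))) (A : Set U) {r : List (TSym (Set U))}
    (hr : r.head? ≠ some TSym.slash) :
    GammaMap g (l ++ TSym.ltr A :: r) = GammaMap g l ++ TSym.ltr (g A) :: GammaMap g r := by
  rw [gammaMap_append g l (by simp), gammaMap_cons, gammaSym_of_ne_slash g _ hr]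
  rfl

end GammaMap

section Inst

@[simp] theorem symInst_op_right_iff {x : TSym U} : SymInst x TSym.op ↔ x = TSym.op :=
  ⟨fun h => by cases h; rfl, by rintro rfl; exact .op⟩

@[simp] theorem symInst_cl_right_iff {x : TSym U} : SymInst x TSym.cl ↔ x = TSym.cl :=
  ⟨fun h => by cases h; rfl, by rintro rfl; exact .cl⟩

@[simp] theorem symInst_slash_right_iff {x : TSym U} : SymInst x TSym.slash ↔ x = TSym.slash :=
  ⟨fun h => by cases h; rfl, by rintro rfl; exact .slash⟩

@[simp] theorem symInst_ltr_right_iff {x : TSym U} {A : Set U} :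
    SymInst x (TSym.ltr A) ↔ ∃ a ∈ A, x = TSym.ltr a :=
  ⟨fun h => by cases h with | ltr ha => exact ⟨_, ha, rfl⟩, by rintro ⟨a, ha, rfl⟩; exact .ltr ha⟩

@[simp] theorem symInst_op_left_iff {Y : TSym (Set U)} : SymInst TSym.op Y ↔ Y = TSym.op :=
  ⟨fun h => by cases h; rfl, by rintro rfl; exact .op⟩

@[simp] theorem symInst_cl_left_iff {Y : TSym (Set U)} : SymInst TSym.cl Y ↔ Y = TSym.cl :=
  ⟨fun h => by cases h; rfl, by rintro rfl; exact .cl⟩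

@[simp] theorem symInst_slash_left_iff {Y : TSym (Set U)} :
    SymInst TSym.slash Y ↔ Y = TSym.slash :=
  ⟨fun h => by cases h; rfl, by rintro rfl; exact .slash⟩

@[simp] theorem symInst_ltr_left_iff {a : U} {Y : TSym (Set U)} :
    SymInst (TSym.ltr a) Y ↔ ∃ A, a ∈ A ∧ Y = TSym.ltr A :=
  ⟨fun h => by cases h with | ltr ha => exact ⟨_, ha, rfl⟩, by rintro ⟨A, ha, rfl⟩; exact .ltr ha⟩

theorem Inst.append {a b : List (TSym U)} {A B : List (TSym (Set U))}
    (ha : Inst a A) (hb : Inst b B) : Inst (a ++ b) (A ++ B) :=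
  List.rel_append ha hb

theorem inst_append_right_iff {v : List (TSym U)} {A B : List (TSym (Set U))} :
    Inst v (A ++ B) ↔ ∃ v₁ v₂, v = v₁ ++ v₂ ∧ Inst v₁ A ∧ Inst v₂ B := by
  constructor
  · intro h
    exact ⟨_, _, (List.take_append_drop A.length v).symm,
      List.forall₂_take_append _ _ _ h, List.forall₂_drop_append _ _ _ h⟩
  · rintro ⟨v₁, v₂, rfl, h₁, h₂⟩
    exact h₁.append h₂

theorem inst_cons_right_iff {v : List (TSym U)} {X : TSym (Set U)} {W : List (TSym (Set U))} :
    Inst v (X :: W) ↔ ∃ x v', SymInst x X ∧ Inst v' W ∧ v = x :: v' :=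
  List.forall₂_cons_right_iff

theorem inst_strOf_strOf_iff {s : List U} {Bs : List (Set U)} :
    Inst (strOf s) (strOf Bs) ↔ List.Forall₂ (· ∈ ·) s Bs := by
  simp [Inst, strOf, List.forall₂_map_left_iff, List.forall₂_map_right_iff]

theorem inst_strOf_right_iff {v : List (TSym U)} {Bs : List (Set U)} :
    Inst v (strOf Bs) ↔ ∃ s, v = strOf s ∧ List.Forall₂ (· ∈ ·) s Bs := by
  induction Bs generalizing v with
  | nil => simp [Inst, strOf]
  | cons B Bs ih =>
    rw [strOf, List.map_cons, ← strOf, inst_cons_right_iff]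
    constructor
    · rintro ⟨x, v', hx, hv', rfl⟩
      obtain ⟨s, rfl, hs⟩ := ih.1 hv'
      obtain ⟨a, ha, rfl⟩ := symInst_ltr_right_iff.1 hx
      exact ⟨a :: s, rfl, .cons ha hs⟩
    · rintro ⟨_ | ⟨a, s⟩, rfl, hs⟩
      · cases hs
      · obtain ⟨ha, hs⟩ := List.forall₂_cons.1 hs
        exact ⟨_, _, .ltr ha, ih.2 ⟨s, rfl, hs⟩, rfl⟩

theorem inst_append_stateNode_iff {w : List (TSym U)} {L R : List (TSym (Set U))} {C : Set U}
    {Bs : List (Set U)} :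
    Inst w (L ++ TSym.op :: TSym.ltr C :: TSym.slash :: (strOf Bs ++ TSym.cl :: R)) ↔
      ∃ w₁ c w₂ s, w = w₁ ++ TSym.op :: TSym.ltr c :: TSym.slash :: (strOf s ++ TSym.cl :: w₂) ∧
        Inst w₁ L ∧ c ∈ C ∧ List.Forall₂ (· ∈ ·) s Bs ∧ Inst w₂ R := by
  simp [inst_append_right_iff, inst_cons_right_iff, inst_strOf_right_iff]

theorem inst_append_ltr_iff {w : List (TSym U)} {L R : List (TSym (Set U))} {B : Set U} :
    Inst w (L ++ TSym.ltr B :: R) ↔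
      ∃ w₁ b w₂, w = w₁ ++ TSym.ltr b :: w₂ ∧ Inst w₁ L ∧ b ∈ B ∧ Inst w₂ R := by
  simp [inst_append_right_iff, inst_cons_right_iff]

end Inst

section InstGammaMap

variable {g : Set U → Set U}

theorem symInst_gammaSym_iff {z : TSym U} (hz : ∀ a, z ≠ TSym.ltr a) (y : TSym (Set U))
    (n : Option (TSym (Set U))) : SymInst z (gammaSym g y n) ↔ SymInst z y := by
  obtain rfl | rfl | rfl : z = TSym.op ∨ z = TSym.cl ∨ z = TSym.slash := by
    rcases z with _ | _ | _ | a
    exacts [.inl rfl, .inr (.inl rfl), .inr (.inr rfl), absurd rfl (hz a)]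
  all_goals
    rcases y with _ | _ | _ | A <;> rcases n with _ | ⟨_ | _ | _ | _⟩ <;> simp [gammaSym, symRel]

theorem inst_cons_gammaMap_iff {z : TSym U} {v : List (TSym U)} {q : List (TSym (Set U))} :
    Inst (z :: v) (GammaMap g q) ↔
      ∃ y q', q = y :: q' ∧ SymInst z (gammaSym g y q'.head?) ∧ Inst v (GammaMap g q') := by
  rcases q with _ | ⟨y, q'⟩ <;> simp [Inst, GammaMap, gammaMap_cons]

theorem Inst.head?_ne_slash_of_gammaMap {v : List (TSym U)} {q : List (TSym (Set U))}
    (h : Inst v (GammaMap g q)) (hv : v.head? ≠ some TSym.slash) :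
    q.head? ≠ some TSym.slash := by
  rcases v with _ | ⟨z, v⟩
  · rcases q with _ | ⟨y, q'⟩ <;> simp_all [Inst, gammaMap_cons]
  · obtain ⟨y, q', rfl, hy, -⟩ := inst_cons_gammaMap_iff.1 h
    rintro ⟨⟩
    simp_all

theorem inst_op_cons_gammaMap_iff {v : List (TSym U)} {q : List (TSym (Set U))} :
    Inst (TSym.op :: v) (GammaMap g q) ↔ ∃ q', q = TSym.op :: q' ∧ Inst v (GammaMap g q') := by
  simp [inst_cons_gammaMap_iff, symInst_gammaSym_iff]

theorem inst_cl_cons_gammaMap_iff {v : List (TSym U)} {q : List (TSym (Set U))} :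
    Inst (TSym.cl :: v) (GammaMap g q) ↔ ∃ q', q = TSym.cl :: q' ∧ Inst v (GammaMap g q') := by
  simp [inst_cons_gammaMap_iff, symInst_gammaSym_iff]

theorem inst_state_cons_gammaMap {a : U} {v : List (TSym U)} {q : List (TSym (Set U))}
    (h : Inst (TSym.ltr a :: TSym.slash :: v) (GammaMap g q)) :
    ∃ A q', q = TSym.ltr A :: TSym.slash :: q' ∧ a ∈ A ∧ Inst v (GammaMap g q') := by
  obtain ⟨y, q', rfl, hy, hv⟩ := inst_cons_gammaMap_iff.1 h
  obtain ⟨y', q'', rfl, hy', hv'⟩ := inst_cons_gammaMap_iff.1 hv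
  rw [symInst_gammaSym_iff (by simp), symInst_slash_left_iff] at hy'
  subst hy'
  obtain ⟨A, ha, rfl⟩ := symInst_ltr_left_iff.1 hy
  exact ⟨A, q'', rfl, ha, hv'⟩

theorem inst_ltr_cons_gammaMap {a : U} {v : List (TSym U)} {q : List (TSym (Set U))}
    (h : Inst (TSym.ltr a :: v) (GammaMap g q)) (hv : v.head? ≠ some TSym.slash) :
    ∃ A q', q = TSym.ltr A :: q' ∧ a ∈ g A ∧ Inst v (GammaMap g q') := by
  obtain ⟨y, q', rfl, hy, hv'⟩ := inst_cons_gammaMap_iff.1 h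
  rw [gammaSym_of_ne_slash _ _ (hv'.head?_ne_slash_of_gammaMap hv)] at hy
  obtain ⟨A, rfl⟩ : ∃ A, y = TSym.ltr A := by rcases y with _ | _ | _ | A <;> simp_all [symRel]
  exact ⟨A, q', rfl, by simpa [symRel] using hy, hv'⟩

theorem inst_strOf_append_gammaMap {s : List U} {v : List (TSym U)} {q : List (TSym (Set U))}
    (h : Inst (strOf s ++ v) (GammaMap g q)) (hv : v.head? ≠ some TSym.slash) :
    ∃ As q', q = strOf As ++ q' ∧ List.Forall₂ (· ∈ ·) s (As.map g) ∧
      Inst v (GammaMap g q') := by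
  induction s generalizing q with
  | nil => exact ⟨[], q, rfl, .nil, h⟩
  | cons a s ih =>
    have hs : (strOf s ++ v).head? ≠ some TSym.slash := by cases s <;> simp_all [strOf]
    obtain ⟨A, q', rfl, ha, h'⟩ := inst_ltr_cons_gammaMap h hs
    obtain ⟨As, q'', rfl, hAs, hq''⟩ := ih h'
    exact ⟨A :: As, q'', rfl, .cons ha hAs, hq''⟩

theorem Inst.exists_append_of_gammaMap {v₁ v₂ : List (TSym U)} {q : List (TSym (Set U))}
    (h : Inst (v₁ ++ v₂) (GammaMap g q)) (hv₂ : v₂.head? ≠ some TSym.slash) :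
    ∃ q₁ q₂, q = q₁ ++ q₂ ∧ Inst v₁ (GammaMap g q₁) ∧ Inst v₂ (GammaMap g q₂) := by
  induction v₁ generalizing q with
  | nil => exact ⟨[], q, rfl, .nil, h⟩
  | cons z v₁ ih =>
    obtain ⟨y, q', rfl, hz, h'⟩ := inst_cons_gammaMap_iff.1 h
    obtain ⟨q₁, q₂, rfl, h₁, h₂⟩ := ih h'
    have hhead : gammaSym g y (q₁ ++ q₂).head? = gammaSym g y q₁.head? := by
      rcases q₁ with _ | ⟨y₁, q₁⟩
      · rw [List.nil_append, gammaSym_of_ne_slash _ _ (h₂.head?_ne_slash_of_gammaMap hv₂)]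
        rfl
      · rfl
    rw [hhead] at hz
    exact ⟨y :: q₁, q₂, rfl, inst_cons_gammaMap_iff.2 ⟨y, q₁, rfl, hz, h₁⟩, h₂⟩

end InstGammaMap

theorem gMove_iff {V : Type} {Q0 : Set V} {Δ : Set (V × V × V)} {γ : V → Set V}
    {u w : List (TSym V)} :
    GMove Q0 Δ γ u w ↔
      (∃ l r s a, a ∈ Q0 ∧ u = l ++ TSym.op :: (strOf s ++ TSym.cl :: r) ∧
        w = l ++ TSym.op :: TSym.ltr a :: TSym.slash :: (strOf s ++ TSym.cl :: r)) ∨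
      (∃ l r s a b c, (a, b, c) ∈ Δ ∧
        u = l ++ TSym.op :: TSym.ltr a :: TSym.slash :: (strOf (b :: s) ++ TSym.cl :: r) ∧
        w = l ++ TSym.op :: TSym.ltr c :: TSym.slash :: (strOf s ++ TSym.cl :: r)) ∨
      (∃ l r a b, b ∈ γ a ∧ u = l ++ TSym.op :: TSym.ltr a :: TSym.slash :: TSym.cl :: r ∧
        w = l ++ TSym.ltr b :: r) := by
  constructor
  · rintro (@⟨l, r, s, a, ha⟩ | @⟨l, r, s, a, b, c, h⟩ | @⟨l, r, a, b, hb⟩)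
    · exact .inl ⟨l, r, s, a, ha, by simp, by simp⟩
    · exact .inr (.inl ⟨l, r, s, a, b, c, h, by simp [strOf], by simp⟩)
    · exact .inr (.inr ⟨l, r, a, b, hb, by simp, by simp⟩)
  · rintro (⟨l, r, s, a, ha, rfl, rfl⟩ | ⟨l, r, s, a, b, c, h, rfl, rfl⟩ |
      ⟨l, r, a, b, hb, rfl, rfl⟩)
    · simpa using GMove.init (l := l) (r := r) (s := s) (Δ := Δ) (γ := γ) ha
    · simpa [strOf] using GMove.horiz (l := l) (r := r) (s := s) (Q0 := Q0) (γ := γ) h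
    · simpa using GMove.vert (l := l) (r := r) (Q0 := Q0) (Δ := Δ) hb

section SubsetConstruction

variable {Sa Q Q0 : Set U} {Δ : Set (U × U × U)} {γ : U → Set U}

/-- The invariant of the trees of `A'`. It supplies the side conditions `A, B ⊆ Q` of the rules
of `A'`; at a vertical move `l⟨A/⟩r ⇒ lAr` it gives `A ∩ Σ = ∅`, so that `Γ(A)` is the union of
the `γ(a)`, and that `r` does not start with a slash, so that `Γ` reads the new `A` as a label. -/
def IsConfig (Q Sa : Set U) (w : List (TSym (Set U))) : Prop :=
  (∀ A, TSym.ltr A ∈ w → A ⊆ Q) ∧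
    w.IsChain (fun x y => y = TSym.slash → ∃ A, x = TSym.ltr A ∧ Disjoint A Sa)

theorem IsConfig.nMove (hQ0 : Q0 ⊆ Q \ Sa) (hΔ : ∀ p ∈ Δ, p.2.2 ∈ Q \ Sa)
    {u' w' : List (TSym (Set U))} (hc : IsConfig Q Sa u')
    (hm : NMove Q0 (subsetRules Sa γ Δ Q) u' w') : IsConfig Q Sa w' := by
  have hΔ' : ∀ A B, subsetDelta Sa γ Δ A B ⊆ Q \ Sa := fun A B c ⟨_, _, _, _, h⟩ => hΔ _ h
  rcases gMove_iff.1 hm with ⟨l, r, As, A, hA, rfl, rfl⟩ |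
    ⟨l, r, As, A, B, C, ⟨-, -, hC⟩, rfl, rfl⟩ | ⟨l, r, A, B, hB, rfl, rfl⟩
  · rw [Set.mem_singleton_iff] at hA
    subst hA
    rcases As with _ | ⟨B, As⟩ <;>
      simp_all [IsConfig, List.isChain_append, List.isChain_cons_cons, strOf, Set.subset_sdiff,
        or_imp, forall_and]
  · simp only at hC
    subst hC
    rcases As with _ | ⟨B', As⟩ <;>
      simp_all [IsConfig, List.isChain_append, List.isChain_cons_cons, strOf, Set.subset_sdiff,
        or_imp, forall_and]
  · rw [Set.mem_singleton_iff] at hB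
    subst hB
    rcases r with _ | ⟨x, r⟩ <;>
      simp_all [IsConfig, List.isChain_append, List.isChain_cons_cons, or_imp, forall_and]

theorem IsConfig.disjoint_and_head?_ne_slash {l r : List (TSym (Set U))} {A : Set U}
    (hc : IsConfig Q Sa (l ++ TSym.op :: TSym.ltr A :: TSym.slash :: TSym.cl :: r)) :
    Disjoint A Sa ∧ r.head? ≠ some TSym.slash := by
  rcases r with _ | ⟨x, r⟩ <;> simp_all [IsConfig, List.isChain_append, List.isChain_cons_cons]

theorem exists_mem_of_mem_gammaExt {A : Set U} (hA : Disjoint A Sa) {b : U}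
    (hb : b ∈ gammaExt Sa γ A) : ∃ a ∈ A, b ∈ γ a := by
  obtain ⟨a, ha, hb | ⟨-, haSa⟩⟩ := hb
  · exact ⟨a, ha, hb⟩
  · exact absurd haSa (Set.disjoint_left.1 hA ha)

theorem exists_nMove_of_gMove {u w : List (TSym U)} {u' : List (TSym (Set U))}
    (hc : IsConfig Q Sa u') (hu : Inst u (GammaMap (gammaExt Sa γ) u'))
    (hm : GMove Q0 Δ γ u w) :
    ∃ w', NMove Q0 (subsetRules Sa γ Δ Q) u' w' ∧ Inst w (GammaMap (gammaExt Sa γ) w') := by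
  rcases gMove_iff.1 hm with ⟨l, r, s, a, ha, rfl, rfl⟩ | ⟨l, r, s, a, b, c, habc, rfl, rfl⟩ |
    ⟨l, r, a, b, hb, rfl, rfl⟩
  · obtain ⟨l', m₁, rfl, hl, h₁⟩ := hu.exists_append_of_gammaMap (by simp)
    obtain ⟨m₂, rfl, h₂⟩ := inst_op_cons_gammaMap_iff.1 h₁
    obtain ⟨As, m₃, rfl, hs, h₃⟩ := inst_strOf_append_gammaMap h₂ (by simp)
    obtain ⟨r', rfl, hr⟩ := inst_cl_cons_gammaMap_iff.1 h₃
    refine ⟨_, gMove_iff.2 (.inl ⟨l', r', As, Q0, rfl, rfl, rfl⟩), ?_⟩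
    rw [gammaMap_append_stateNode, inst_append_stateNode_iff]
    exact ⟨l, a, r, s, rfl, hl, ha, hs, hr⟩
  · obtain ⟨l', m₁, rfl, hl, h₁⟩ := hu.exists_append_of_gammaMap (by simp)
    obtain ⟨m₂, rfl, h₂⟩ := inst_op_cons_gammaMap_iff.1 h₁
    obtain ⟨A, m₃, rfl, ha, h₃⟩ := inst_state_cons_gammaMap h₂
    obtain ⟨_ | ⟨B, As⟩, m₄, rfl, hs, h₄⟩ := inst_strOf_append_gammaMap h₃ (by simp)
    · cases hs
    obtain ⟨r', rfl, hr⟩ := inst_cl_cons_gammaMap_iff.1 h₄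
    obtain ⟨hb, hs⟩ := List.forall₂_cons.1 hs
    have hAB : A ⊆ Q ∧ B ⊆ Q := ⟨hc.1 A (by simp), hc.1 B (by simp [strOf])⟩
    refine ⟨_, gMove_iff.2 (.inr (.inl ⟨l', r', As, A, B, subsetDelta Sa γ Δ A B,
      ⟨hAB.1, hAB.2, rfl⟩, rfl, rfl⟩)), ?_⟩
    rw [gammaMap_append_stateNode, inst_append_stateNode_iff]
    exact ⟨l, c, r, s, rfl, hl, ⟨a, ha, b, hb, habc⟩, hs, hr⟩
  · obtain ⟨l', m₁, rfl, hl, h₁⟩ := hu.exists_append_of_gammaMap (by simp)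
    obtain ⟨m₂, rfl, h₂⟩ := inst_op_cons_gammaMap_iff.1 h₁
    obtain ⟨A, m₃, rfl, ha, h₃⟩ := inst_state_cons_gammaMap h₂
    obtain ⟨r', rfl, hr⟩ := inst_cl_cons_gammaMap_iff.1 h₃
    refine ⟨_, gMove_iff.2 (.inr (.inr ⟨l', r', A, A, rfl, rfl, rfl⟩)), ?_⟩
    rw [gammaMap_append_ltr _ _ _ hc.disjoint_and_head?_ne_slash.2, inst_append_ltr_iff]
    exact ⟨l, b, r, rfl, hl, ⟨a, ha, .inl hb⟩, hr⟩

theorem exists_gMove_of_nMove {u' w' : List (TSym (Set U))} {w : List (TSym U)}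
    (hc : IsConfig Q Sa u') (hm : NMove Q0 (subsetRules Sa γ Δ Q) u' w')
    (hw : Inst w (GammaMap (gammaExt Sa γ) w')) :
    ∃ u, Inst u (GammaMap (gammaExt Sa γ) u') ∧ GMove Q0 Δ γ u w := by
  rcases gMove_iff.1 hm with ⟨l', r', As, A, hA, rfl, rfl⟩ |
    ⟨l', r', As, A, B, C, ⟨-, -, hC⟩, rfl, rfl⟩ | ⟨l', r', A, B, hB, rfl, rfl⟩
  · rw [Set.mem_singleton_iff] at hA
    subst hA
    rw [gammaMap_append_stateNode, inst_append_stateNode_iff] at hw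
    obtain ⟨w₁, a, w₂, s, rfl, hw₁, ha, hs, hw₂⟩ := hw
    refine ⟨w₁ ++ TSym.op :: (strOf s ++ TSym.cl :: w₂), ?_,
      gMove_iff.2 (.inl ⟨w₁, w₂, s, a, ha, rfl, rfl⟩)⟩
    rw [gammaMap_append_node]
    exact hw₁.append (.cons .op ((inst_strOf_strOf_iff.2 hs).append (.cons .cl hw₂)))
  · simp only at hC
    subst hC
    rw [gammaMap_append_stateNode, inst_append_stateNode_iff] at hw
    obtain ⟨w₁, c, w₂, s, rfl, hw₁, ⟨a, ha, b, hb, habc⟩, hs, hw₂⟩ := hw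
    refine ⟨w₁ ++ TSym.op :: TSym.ltr a :: TSym.slash :: (strOf (b :: s) ++ TSym.cl :: w₂), ?_,
      gMove_iff.2 (.inr (.inl ⟨w₁, w₂, s, a, b, c, habc, rfl, rfl⟩))⟩
    rw [gammaMap_append_stateNode, inst_append_stateNode_iff]
    exact ⟨w₁, a, w₂, b :: s, rfl, hw₁, ha, .cons hb hs, hw₂⟩
  · rw [Set.mem_singleton_iff] at hB
    subst hB
    obtain ⟨hA, hr'⟩ := hc.disjoint_and_head?_ne_slash
    rw [gammaMap_append_ltr _ _ _ hr', inst_append_ltr_iff] at hw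
    obtain ⟨w₁, b, w₂, rfl, hw₁, hb, hw₂⟩ := hw
    obtain ⟨a, ha, hb⟩ := exists_mem_of_mem_gammaExt hA hb
    refine ⟨w₁ ++ TSym.op :: TSym.ltr a :: TSym.slash :: TSym.cl :: w₂, ?_,
      gMove_iff.2 (.inr (.inr ⟨w₁, w₂, a, b, hb, rfl, rfl⟩))⟩
    rw [gammaMap_append_finishedNode]
    exact hw₁.append (.cons .op (.cons (.ltr ha) (.cons .slash (.cons .cl hw₂))))

theorem exists_relPow_nMove_of_relPow_gMove (hQ0 : Q0 ⊆ Q \ Sa)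
    (hΔ : ∀ p ∈ Δ, p.2.2 ∈ Q \ Sa) (n : ℕ) {u v : List (TSym U)} {u' : List (TSym (Set U))}
    (hc : IsConfig Q Sa u') (hu : Inst u (GammaMap (gammaExt Sa γ) u'))
    (huv : relPow (GMove Q0 Δ γ) n u v) :
    ∃ v', relPow (NMove Q0 (subsetRules Sa γ Δ Q)) n u' v' ∧
      Inst v (GammaMap (gammaExt Sa γ) v') := by
  induction n generalizing u u' with
  | zero => exact ⟨u', rfl, huv ▸ hu⟩
  | succ n ih =>
    obtain ⟨w, huw, hwv⟩ := huv
    obtain ⟨w', huw', hw⟩ := exists_nMove_of_gMove hc hu huw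
    obtain ⟨v', hwv', hv⟩ := ih (hc.nMove hQ0 hΔ huw') hw hwv
    exact ⟨v', ⟨w', huw', hwv'⟩, hv⟩

theorem exists_relPow_gMove_of_relPow_nMove (hQ0 : Q0 ⊆ Q \ Sa)
    (hΔ : ∀ p ∈ Δ, p.2.2 ∈ Q \ Sa) (n : ℕ) {u' v' : List (TSym (Set U))} {v : List (TSym U)}
    (hc : IsConfig Q Sa u') (huv' : relPow (NMove Q0 (subsetRules Sa γ Δ Q)) n u' v')
    (hv : Inst v (GammaMap (gammaExt Sa γ) v')) :
    ∃ u, Inst u (GammaMap (gammaExt Sa γ) u') ∧ relPow (GMove Q0 Δ γ) n u v := by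
  induction n generalizing u' with
  | zero => exact ⟨v, huv' ▸ hv, rfl⟩
  | succ n ih =>
    obtain ⟨w', huw', hwv'⟩ := huv'
    obtain ⟨w, hw, hwv⟩ := ih (hc.nMove hQ0 hΔ huw') hwv'
    obtain ⟨u, hu, huw⟩ := exists_gMove_of_nMove hc huw' hw
    exact ⟨u, hu, w, huw, hwv⟩

end SubsetConstruction

section Counterpart

variable {Sa : Set U} {t : List (TSym U)}

theorem IsTree.mem {S : Set (TSym U)} (h : IsTree S t) {x : TSym U} (hx : x ∈ t) :
    x = TSym.op ∨ x = TSym.cl ∨ x ∈ S := by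
  induction h <;> aesop

theorem mem_treeRel_sing (ht : t ∈ TreeSet Sa) {x : TSym (Set U)} (hx : x ∈ treeRel sing t) :
    x = TSym.op ∨ x = TSym.cl ∨ ∃ a ∈ Sa, x = TSym.ltr {a} := by
  obtain ⟨y, hy, rfl⟩ := List.mem_map.1 hx
  rcases IsTree.mem ht hy with rfl | rfl | ⟨a, ha, rfl⟩
  · exact .inl rfl
  · exact .inr (.inl rfl)
  · exact .inr (.inr ⟨a, ha, rfl⟩)

theorem isConfig_treeRel_sing {Q : Set U} (hSaQ : Sa ⊆ Q) (ht : t ∈ TreeSet Sa) :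
    IsConfig Q Sa (treeRel sing t) := by
  refine ⟨fun A hA => ?_, (List.pairwise_of_forall_mem_list fun x _ y hy => ?_).isChain⟩
  · rcases mem_treeRel_sing ht hA with h | h | ⟨a, ha, h⟩ <;> cases h
    exact Set.singleton_subset_iff.2 (hSaQ ha)
  · rcases mem_treeRel_sing ht hy with rfl | rfl | ⟨a, ha, rfl⟩ <;> simp

theorem gammaExt_singleton {γ : U → Set U} {a : U} (hγ : γ a = ∅) (ha : a ∈ Sa) :
    gammaExt Sa γ {a} = {a} := by
  ext c
  simp [gammaExt, hγ, ha]

theorem inst_treeRel_sing_iff {v : List (TSym U)} : Inst v (treeRel sing t) ↔ v = t := by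
  have h (x y : TSym U) : SymInst x (symRel sing y) ↔ x = y := by
    rcases y with _ | _ | _ | a <;> simp [symRel, sing]
  rw [Inst, treeRel, List.forall₂_map_right_iff]
  simp only [h]
  rw [List.forall₂_eq_eq_eq]

theorem inst_gammaMap_treeRel_sing_iff {γ : U → Set U} (hγ : ∀ a ∈ Sa, γ a = ∅)
    (ht : t ∈ TreeSet Sa) {v : List (TSym U)} :
    Inst v (GammaMap (gammaExt Sa γ) (treeRel sing t)) ↔ v = t := by
  have hslash : TSym.slash ∉ treeRel sing t := fun h => by
    rcases mem_treeRel_sing ht h with h | h | ⟨a, -, h⟩ <;> cases h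
  have hfix : treeRel (gammaExt Sa γ) (treeRel sing t) = treeRel sing t := by
    refine (List.map_congr_left (g := id) fun x hx => ?_).trans (List.map_id _)
    rcases mem_treeRel_sing ht hx with rfl | rfl | ⟨a, ha, rfl⟩
    · rfl
    · rfl
    · simp [symRel, gammaExt_singleton (hγ a ha) ha]
  rw [gammaMap_eq_treeRel _ hslash, hfix, inst_treeRel_sing_iff]

end Counterpart

/-- subset-construction step correspondence: let `A` be a
GNFSTA with pure states and `A'` the subset-construction DFSTA.  For
`t ∈ T(Σ)` with counterpart `t'` (obtained by renaming `a ↦ {a}`), and for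
every `n`: every `v` with `t ⇒ⁿ v` is an instance of `Γ(v')` for some `v'`
with `t' ⇒ⁿ_{A'} v'`, and conversely, for every `v'` with `t' ⇒ⁿ_{A'} v'`,
every instance of `Γ(v')` is reachable: `t ⇒ⁿ v`. -/
theorem subset_steps_correspondence {U : Type} (Sa Q Qf Q0 : Set U)
    (Δ : Set (U × U × U)) (γ : U → Set U)
    (hwf : GWF Sa Q Qf Q0 Δ γ) (hpure : PureG Sa Q Qf Q0 Δ γ)
    (t : List (TSym U)) (ht : t ∈ TreeSet Sa) (n : ℕ) :
    (∀ v, relPow (GMove Q0 Δ γ) n t v →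
      ∃ v', relPow (NMove Q0 (subsetRules Sa γ Δ Q)) n (treeRel sing t) v' ∧
        Inst v (GammaMap (gammaExt Sa γ) v')) ∧
    (∀ v', relPow (NMove Q0 (subsetRules Sa γ Δ Q)) n (treeRel sing t) v' →
      ∀ v, Inst v (GammaMap (gammaExt Sa γ) v') →
        relPow (GMove Q0 Δ γ) n t v) := by
  obtain ⟨-, hSaQ, -, -, hΔQ, -⟩ := hwf
  obtain ⟨hΔSa, hγSa, -, hQ0, -⟩ := hpure
  have hΔ : ∀ p ∈ Δ, p.2.2 ∈ Q \ Sa := fun p hp => ⟨(hΔQ p hp).2.2, (hΔSa p hp).2⟩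
  have hc := isConfig_treeRel_sing hSaQ ht
  have hinst (v : List (TSym U)) := inst_gammaMap_treeRel_sing_iff (v := v) hγSa ht
  refine ⟨fun v hv => exists_relPow_nMove_of_relPow_gMove hQ0 hΔ n hc ((hinst t).2 rfl) hv,
    fun v' hv' v hv => ?_⟩
  obtain ⟨u, hu, huv⟩ := exists_relPow_gMove_of_relPow_nMove hQ0 hΔ n hc hv' hv
  rwa [(hinst u).1 hu] at huv

end StringTree
end
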